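/- arXiv:2311.06171 — 3 statements merged into one kernel-verified Lean document; each statement's English description precedes it below -/
import Mathlib

section
/- Let G = (V,E) be a finite graph and let μ be the Ising measure μ(σ) ∝ exp( Σ_{(u,v)∈E} J_{uv} σ_u σ_v + Σ_{u∈V} h_u σ_u ) on {-1,+1}^V with nonnegative couplings J_{uv} ≥ 0 and arbitrary external field h ∈ ℝ^V. Then for any two subsets of vertices Δ ⊂ Δ' ⊆ V, d_TV( μ(σ_Δ ∈ · | σ_{∂Δ'} = +), μ(σ_Δ ∈ · | σ_{∂Δ'} = −) ) ≤ Σ_{v∈Δ} d_TV( μ(σ_v ∈ · | σ_{∂Δ'} = +), μ(σ_v ∈ · | σ_{∂Δ'} = −) ), where ∂Δ' is the exterior vertex boundary of Δ' in G and + (resp. −) denotes the all-plus (resp. all-minus) configuration on ∂Δ'. -/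
open scoped BigOperators
open MeasureTheory ProbabilityTheory

noncomputable section
open scoped Classical

namespace RFIM

/-- A site of the lattice `ℤ^d`. -/
abbrev Site (d : ℕ) := Fin d → ℤ

/-- ℓ∞ distance on `ℤ^d`. -/
def distInf {d : ℕ} (x y : Site d) : ℕ :=
  Finset.univ.sup fun i => (x i - y i).natAbs

/-- Nearest-neighbour adjacency on `ℤ^d` (ℓ¹ distance one). -/
def Adj {d : ℕ} (x y : Site d) : Prop := (∑ i, (x i - y i).natAbs) = 1

/-- Closed ℓ∞ ball of radius `r` about `o`, as a finite set of sites. -/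
def ball {d : ℕ} (o : Site d) (r : ℕ) : Finset (Site d) :=
  Fintype.piFinset fun i => Finset.Icc (o i - (r : ℤ)) (o i + (r : ℤ))

/-- The box `Λ_n = [-n,n]^d ∩ ℤ^d`. -/
def box (d n : ℕ) : Finset (Site d) := ball (fun _ => 0) n

/-- Exterior vertex boundary of `A` inside `Λ`. -/
def bdryIn {d : ℕ} (Λ A : Finset (Site d)) : Finset (Site d) :=
  (Λ \ A).filter fun v => ∃ u ∈ A, Adj u v

/-- Exterior vertex boundary of `A` in all of `ℤ^d`. -/
def bdry {d : ℕ} (A : Finset (Site d)) : Finset (Site d) :=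
  (A.biUnion fun u => ball u 1).filter fun v => v ∉ A ∧ ∃ u ∈ A, Adj u v

/-- Ising configurations on a finite set of sites. -/
abbrev Conf {d : ℕ} (A : Finset (Site d)) := ↥A → Bool

/-- The spin value (±1) of a Boolean. -/
def spin (b : Bool) : ℝ := if b then 1 else -1

/-- Energy (negated Hamiltonian) of the RFIM on `A` at inverse temperature `β`, external
field `h`, with boundary condition `τ` on the set `bd`. -/
def energy {d : ℕ} (β : ℝ) (h : Site d → ℝ) (A bd : Finset (Site d)) (τ : Site d → Bool)
    (σ : Conf A) : ℝ :=
  β / 2 * ∑ u : A, ∑ v : A, (if Adj u.1 v.1 then spin (σ u) * spin (σ v) else 0)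
    + β * ∑ u : A, ∑ v ∈ bd, (if Adj u.1 v then spin (σ u) * spin (τ v) else 0)
    + ∑ u : A, h u.1 * spin (σ u)

/-- The RFIM Gibbs measure on `A` with boundary condition `τ` on `bd`, as a density. -/
def gibbs {d : ℕ} (β : ℝ) (h : Site d → ℝ) (A bd : Finset (Site d)) (τ : Site d → Bool) :
    Conf A → ℝ :=
  fun σ => Real.exp (energy β h A bd τ σ) / ∑ σ' : Conf A, Real.exp (energy β h A bd τ σ')

/-- The RFIM measure on `A` with free boundary condition. -/
def gibbsFree {d : ℕ} (β : ℝ) (h : Site d → ℝ) (A : Finset (Site d)) : Conf A → ℝ :=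
  gibbs β h A ∅ fun _ => true

/-- Probability that the spin at `o` equals `+1` under the density `p`. -/
def probPlusAt {d : ℕ} {A : Finset (Site d)} (p : Conf A → ℝ) (o : Site d) : ℝ :=
  if ho : o ∈ A then ∑ σ : Conf A, (if σ ⟨o, ho⟩ = true then p σ else 0) else 0

/-- Total variation distance between the single-site marginals at `o` of `p` and `q`. -/
def tvAt {d : ℕ} {A : Finset (Site d)} (p q : Conf A → ℝ) (o : Site d) : ℝ :=
  |probPlusAt p o - probPlusAt q o|

/-- Total variation distance between two densities on a finite space. -/
def tvDist {X : Type*} [Fintype X] (p q : X → ℝ) : ℝ := 1 / 2 * ∑ x, |p x - q x|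

/-- Mean of `φ` under the density `p`. -/
def expectVal {X : Type*} [Fintype X] (p φ : X → ℝ) : ℝ := ∑ x, p x * φ x

/-- Variance of `φ` under the density `p`. -/
def varOf {X : Type*} [Fintype X] (p φ : X → ℝ) : ℝ :=
  expectVal p (fun x => φ x ^ 2) - expectVal p φ ^ 2

/-- Squared oscillation of `φ`. -/
def osc {X : Type*} [Fintype X] [Nonempty X] (φ : X → ℝ) : ℝ :=
  ((⨆ x, φ x) - ⨅ x, φ x) ^ 2

/-- The Dirichlet form of single-site Glauber dynamics for the density `p`. -/
def dirichlet {d : ℕ} {A : Finset (Site d)} (p φ : Conf A → ℝ) : ℝ :=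
  1 / 2 * ∑ σ : Conf A, ∑ σ' : Conf A,
    (if (Finset.univ.filter fun u : ↥A => σ u ≠ σ' u).card = 1 then
      p σ * p σ' / (p σ + p σ') * (φ σ - φ σ') ^ 2 else 0)

/-- The spectral gap of Glauber dynamics for the density `p`. -/
def gap {d : ℕ} {A : Finset (Site d)} (p : Conf A → ℝ) : ℝ :=
  sInf {r : ℝ | ∃ φ : Conf A → ℝ, varOf p φ ≠ 0 ∧ r = dirichlet p φ / varOf p φ}

/-- Conditional probability of spin `b` at `u`, given all other spins of `σ`. -/
def condProb {d : ℕ} {A : Finset (Site d)} (p : Conf A → ℝ) (σ : Conf A) (u : ↥A) (b : Bool) :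
    ℝ :=
  p (Function.update σ u b) / (p (Function.update σ u true) + p (Function.update σ u false))

/-- Generator of continuous-time single-site Glauber dynamics, as a matrix. -/
def generator {d : ℕ} {A : Finset (Site d)} (p : Conf A → ℝ) : Matrix (Conf A) (Conf A) ℝ :=
  Matrix.of fun σ σ' =>
    ∑ u : ↥A,
      ((if σ' = Function.update σ u true then condProb p σ u true else 0)
        + (if σ' = Function.update σ u false then condProb p σ u false else 0)
        - (if σ' = σ then 1 else 0))

/-- The continuous-time Glauber semigroup `P_t = e^{tL}`. -/
def heatSG {d : ℕ} {A : Finset (Site d)} (p : Conf A → ℝ) (t : ℝ) :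
    Matrix (Conf A) (Conf A) ℝ :=
  Matrix.of fun σ σ' => ∑' k : ℕ, t ^ k / (Nat.factorial k : ℝ) * (generator p ^ k) σ σ'

/-- Action of the Glauber semigroup on a test function. -/
def Ptfun {d : ℕ} {A : Finset (Site d)} (p : Conf A → ℝ) (t : ℝ) (φ : Conf A → ℝ) :
    Conf A → ℝ :=
  (heatSG p t).mulVec φ

/-- The (1/4)-total-variation mixing time of continuous-time Glauber dynamics. -/
def mixingTime {d : ℕ} {A : Finset (Site d)} (p : Conf A → ℝ) : ℝ :=
  sInf {t : ℝ | 0 ≤ t ∧ ∀ σ : Conf A, tvDist (fun σ' => heatSG p t σ σ') p ≤ 1 / 4}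

/-- The coordinates of `h` are independent with a common distribution. -/
def IIDField {d : ℕ} {Ω : Type*} [MeasurableSpace Ω] (P : Measure Ω)
    (h : Ω → Site d → ℝ) : Prop :=
  (∀ x, Measurable fun ω => h ω x) ∧
  iIndepFun (fun x ω => h ω x) P ∧
  ∀ x y, IdentDistrib (fun ω => h ω x) (fun ω => h ω y) P P

/-- The coordinates of `h` are i.i.d. with a symmetric distribution. -/
def IIDSymField {d : ℕ} {Ω : Type*} [MeasurableSpace Ω] (P : Measure Ω)
    (h : Ω → Site d → ℝ) : Prop :=
  IIDField P h ∧ ∀ x, IdentDistrib (fun ω => h ω x) (fun ω => -h ω x) P P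

/-- The absolute values of the coordinates of `h` are i.i.d. (signs may be dependent). -/
def IIDAbsField {d : ℕ} {Ω : Type*} [MeasurableSpace Ω] (P : Measure Ω)
    (h : Ω → Site d → ℝ) : Prop :=
  (∀ x, Measurable fun ω => h ω x) ∧
  iIndepFun (fun x ω => |h ω x|) P ∧
  ∀ x y, IdentDistrib (fun ω => |h ω x|) (fun ω => |h ω y|) P P

/-- Weak spatial mixing in expectation, `WSM(C)`, for the RFIM on `Λ`. -/
def WSM {d : ℕ} (β : ℝ) (Λ : Finset (Site d)) {Ω : Type*} [MeasurableSpace Ω]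
    (P : Measure Ω) (h : Ω → Site d → ℝ) (C : ℝ) : Prop :=
  ∀ o ∈ Λ, ∀ r : ℕ, 1 ≤ r →
    (∫ ω, tvAt (gibbs β (h ω) (ball o r ∩ Λ) (bdryIn Λ (ball o r ∩ Λ)) fun _ => true)
               (gibbs β (h ω) (ball o r ∩ Λ) (bdryIn Λ (ball o r ∩ Λ)) fun _ => false) o ∂P)
      ≤ C * Real.exp (-(r : ℝ) / C)

/-- The boundary condition agreeing with `ξ` off `z` and taking value `b` at `z`. -/
def extendBC {d : ℕ} (z : Site d) (ξ : Site d → Bool) (b : Bool) : Site d → Bool :=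
  fun x => if x = z then b else ξ x

/-- Strong spatial mixing in expectation, `SSM(C)`, for the RFIM. -/
def SSM {d : ℕ} (β : ℝ) {Ω : Type*} [MeasurableSpace Ω] (P : Measure Ω)
    (h : Ω → Site d → ℝ) (C : ℝ) : Prop :=
  ∀ r : ℕ, 1 ≤ r → ∀ w : Site d, (∀ i, w i ∈ Finset.Ioo (-(r : ℤ)) (r : ℤ)) →
    ∀ z ∈ bdry (ball w r),
      (∫ ω, (⨆ ξ : Site d → Bool,
        tvAt (gibbs β (h ω) (ball w r) (bdry (ball w r)) (extendBC z ξ true))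
             (gibbs β (h ω) (ball w r) (bdry (ball w r)) (extendBC z ξ false)) fun _ => 0) ∂P)
        ≤ C * Real.exp (-(distInf (fun _ => 0) z : ℝ) / C)

/-- `ρ(β,d,K)`. -/
def rhoK (d : ℕ) (β K : ℝ) : ℝ :=
  Real.exp (2 * d * β - K) / (Real.exp (2 * d * β - K) + Real.exp (-(2 * d * β) + K))

/-- The single-site distribution with external field `η`. -/
def sdist (η : ℝ) (b : Bool) : ℝ := Real.exp (η * spin b) / (Real.exp η + Real.exp (-η))

/-- Energy of the RFIM restricted to the sub-domain `D` of `A` (free boundary on `D`). -/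
def energyOn {d : ℕ} (β : ℝ) (h : Site d → ℝ) (A D : Finset (Site d)) (σ : Conf A) : ℝ :=
  β / 2 * ∑ u : A, ∑ v : A,
      (if u.1 ∈ D ∧ v.1 ∈ D ∧ Adj u.1 v.1 then spin (σ u) * spin (σ v) else 0)
    + ∑ u : A, (if u.1 ∈ D then h u.1 * spin (σ u) else 0)

/-- Unnormalized weight of the RFIM on `D ⊆ A` with free boundary, embedded in `Conf A` by
freezing all spins outside `D` to `+1`. -/
def stageWeight {d : ℕ} (β : ℝ) (h : Site d → ℝ) (A D : Finset (Site d)) (σ : Conf A) : ℝ :=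
  if ∀ u : ↥A, u.1 ∉ D → σ u = true then Real.exp (energyOn β h A D σ) else 0

/-- The RFIM measure on `D ⊆ A` with free boundary, embedded in `Conf A`. -/
def stageMeas {d : ℕ} (β : ℝ) (h : Site d → ℝ) (A D : Finset (Site d)) : Conf A → ℝ :=
  fun σ => stageWeight β h A D σ / ∑ σ' : Conf A, stageWeight β h A D σ'

/-- One step of discrete-time Glauber dynamics for `p`, updating a uniformly chosen
vertex of `D`. -/
def glauberStepOn {d : ℕ} {A : Finset (Site d)} (p : Conf A → ℝ) (D : Finset (Site d)) :
    Matrix (Conf A) (Conf A) ℝ :=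
  Matrix.of fun σ σ' => 1 / (D.card : ℝ) * ∑ u : ↥A,
    (if u.1 ∈ D then
      (if σ' = Function.update σ u true then condProb p σ u true else 0)
      + (if σ' = Function.update σ u false then condProb p σ u false else 0)
     else 0)

/-- One step of discrete-time single-site Glauber dynamics for a density `π` on `V → Bool`:
a uniformly chosen vertex is resampled from the conditional distribution. -/
def glauberStep {V : Type*} [Fintype V] [DecidableEq V] (π : (V → Bool) → ℝ) :
    Matrix (V → Bool) (V → Bool) ℝ :=
  Matrix.of fun σ σ' => 1 / (Fintype.card V : ℝ) * ∑ v : V,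
    ((if σ' = Function.update σ v true then
        π (Function.update σ v true)
          / (π (Function.update σ v true) + π (Function.update σ v false)) else 0)
     + (if σ' = Function.update σ v false then
        π (Function.update σ v false)
          / (π (Function.update σ v true) + π (Function.update σ v false)) else 0))

/-- The domain consisting of the first `i` vertices of the enumeration `v`. -/
def prefDom {d : ℕ} (v : ℕ → Site d) (i : ℕ) : Finset (Site d) := (Finset.range i).image v

/-- Extension of a law `p` by an independent spin at `w` with field `η`. -/
def extendStep {d : ℕ} {A : Finset (Site d)} (w : Site d) (η : ℝ) (p : Conf A → ℝ) :
    Conf A → ℝ :=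
  fun σ => if hw : w ∈ A then p (Function.update σ ⟨w, hw⟩ true) * sdist η (σ ⟨w, hw⟩) else p σ

/-- The law of the iterative sampling algorithm after stage `i+1` (domains grow one vertex
at a time along the enumeration `v`; each stage runs `k` steps of Glauber dynamics on the
current domain; spins outside the current domain are frozen to `+1`). -/
def algLaw {d : ℕ} (n : ℕ) (β : ℝ) (h : Site d → ℝ) (v : ℕ → Site d) (k : ℕ) :
    ℕ → Conf (box d n) → ℝ
  | 0 => fun σ => ∏ u : ↥(box d n),
      (if u.1 = v 0 then sdist (h u.1) (σ u) else if σ u = true then 1 else 0)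
  | (i + 1) =>
      Matrix.vecMul (extendStep (v (i + 1)) (h (v (i + 1))) (algLaw n β h v k i))
        (glauberStepOn (stageMeas β h (box d n) (prefDom v (i + 2))) (prefDom v (i + 2)) ^ k)

/-- The collection `Q_n` of cube-like domains. -/
def Qcoll (d n : ℕ) : Set (Finset (Site d)) :=
  {Λ | Λ ⊆ box d n ∧ ∃ r : ℕ, r ≤ n - 1 ∧ ∃ A : Finset (Site d),
    Λ = ball (fun _ => 0) r ∪ (bdry (ball (fun _ => 0) r) ∩ A)}

/-- Adjacency of open sites in the percolation configuration `w`. -/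
def openAdj {d : ℕ} (w : Site d → Bool) (x y : Site d) : Prop :=
  Adj x y ∧ w x = true ∧ w y = true

/-- The open cluster of `x` in `w` has at least `r` vertices. -/
def clusterAtLeast {d : ℕ} (w : Site d → Bool) (x : Site d) (r : ℕ) : Prop :=
  ∃ S : Finset (Site d), w x = true ∧
    (∀ y ∈ S, Relation.ReflTransGen (openAdj w) x y) ∧ r ≤ S.card

/-- `ω^i = ω^h ∨ η` : the union of the weak-field sites and the Bernoulli noise. -/
def omI {d : ℕ} (K : ℝ) (f : Site d → ℝ) (e : Site d → Bool) : Site d → Bool :=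
  fun x => if |f x| ≤ K then true else e x

/-- `η` is an i.i.d. Bernoulli(ρ) field. -/
def BernoulliField {d : ℕ} {Ω' : Type*} [MeasurableSpace Ω'] (P' : Measure Ω')
    (η : Ω' → Site d → Bool) (ρ : ℝ) : Prop :=
  (∀ x, Measurable fun ω => η ω x) ∧
  iIndepFun (fun x ω => η ω x) P' ∧
  ∀ x, P' {ω | η ω x = true} = ENNReal.ofReal ρ

/-- The coarse-grained lattice `Λ_n^{(R)} = Λ_n ∩ R·ℤ^d`. -/
def coarse (d n R : ℕ) : Finset (Site d) :=
  (box d n).filter fun v => ∀ i, (R : ℤ) ∣ v i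

/-- A coarse-graining vertex `v` is `Good` (anti-concentrated-field version): conditionally
on `ω^h`, clusters of `ω^i = ω^h ∨ η` near `v` have exponential tails. -/
def GoodAnti {d : ℕ} (n R : ℕ) (K : ℝ) {Ω' : Type*} [MeasurableSpace Ω'] (P' : Measure Ω')
    (η : Ω' → Site d → Bool) (f : Site d → ℝ) (v : Site d) : Prop :=
  ∀ w ∈ ball v R ∩ box d n, ∀ r : ℕ,
    Real.log R ^ 2 ≤ (r : ℝ) → (r : ℝ) ≤ (R : ℝ) / 8 →
    P' {ω' | clusterAtLeast (omI K f (η ω')) w r} ≤ ENNReal.ofReal (Real.exp (-(r : ℝ)))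

/-- A coarse-graining vertex `v` is `Good` (SSM version). -/
def GoodSSM {d : ℕ} (n R : ℕ) (Cstar β : ℝ) (f : Site d → ℝ) (v : Site d) : Prop :=
  ∀ w ∈ ball v R ∩ box d n, ∀ ℓ r : ℕ,
    Real.log R ^ 2 ≤ (ℓ : ℝ) → ℓ ≤ 2 * r → (2 * r : ℝ) ≤ (R : ℝ) / 4 →
    ∀ a : Site d, (∀ i, a i ∈ Finset.Ioo (-(r : ℤ)) (r : ℤ)) →
    ∀ z ∈ bdry (ball (w + a) r), distInf w z = ℓ →
      (⨆ ξ : Site d → Bool,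
        tvAt (gibbs β f (ball (w + a) r) (bdry (ball (w + a) r)) (extendBC z ξ true))
             (gibbs β f (ball (w + a) r) (bdry (ball (w + a) r)) (extendBC z ξ false)) w)
        ≤ Real.exp (-(ℓ : ℝ) / Cstar)

/-- One step of the `R-*`-adjacency walk inside `S`. -/
def RstarStep {d : ℕ} (R : ℕ) (S : Finset (Site d)) (x y : Site d) : Prop :=
  x ∈ S ∧ y ∈ S ∧ distInf x y = R

/-- The `R-*`-connected component of `w` inside `S` (empty if `w ∉ S`). -/
def componentOf {d : ℕ} (R : ℕ) (S : Finset (Site d)) (w : Site d) : Finset (Site d) :=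
  S.filter fun x => w ∈ S ∧ Relation.ReflTransGen (RstarStep R S) w x

/-- `B_C`: vertices of `Λ_n` within distance `R` of the component `C0` and at distance at
least `R/2` from the good set. -/
def BCblock {d : ℕ} (n R : ℕ) (GoodS C0 : Finset (Site d)) : Finset (Site d) :=
  (box d n).filter fun x => (∃ y ∈ C0, distInf x y ≤ R) ∧ ∀ g ∈ GoodS, R / 2 ≤ distInf x g

/-- Shifts `a ∈ {-R/8, …, R/8}^d`. -/
def shifts (d R : ℕ) : Finset (Site d) :=
  Fintype.piFinset fun _ => Finset.Icc (-(R / 8 : ℕ) : ℤ) ((R / 8 : ℕ) : ℤ)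

/-- Index set of type-1 blocks: centers within distance `3R/4` of the good set. -/
def type1Idx {d : ℕ} (n R : ℕ) (GoodS : Finset (Site d)) : Finset (Site d) :=
  (box d n).filter fun w => ∃ g ∈ GoodS, distInf w g ≤ 3 * R / 4

/-- The type-1 block centered at `w`. -/
def type1Block {d : ℕ} (n R : ℕ) (w : Site d) : Finset (Site d) :=
  ball w (R / 8) ∩ box d n

/-- Index set of type-2 blocks: a bad component together with a shift. -/
def type2Idx {d : ℕ} (n R : ℕ) (BadS : Finset (Site d)) :
    Finset (Finset (Site d) × Site d) :=
  (BadS.image fun w => componentOf R BadS w) ×ˢ shifts d R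

/-- The type-2 block indexed by a component and a shift. -/
def type2Block {d : ℕ} (n R : ℕ) (GoodS : Finset (Site d)) (c : Finset (Site d) × Site d) :
    Finset (Site d) :=
  ((BCblock n R GoodS c.1).image fun x => x + c.2) ∩ box d n

/-- Membership in the collection of blocks constructed from `GoodS` and `BadS`. -/
def IsBlock {d : ℕ} (n R : ℕ) (GoodS BadS : Finset (Site d)) (B : Finset (Site d)) : Prop :=
  (∃ w ∈ type1Idx n R GoodS, B = type1Block (d := d) n R w) ∨
  (∃ c ∈ type2Idx n R BadS, B = type2Block n R GoodS c)

/-- Heat-bath resampling kernel of the block `B` for the measure `p` on `Conf A`. -/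
def blockKernel {d : ℕ} {A : Finset (Site d)} (p : Conf A → ℝ) (B : Finset (Site d)) :
    Matrix (Conf A) (Conf A) ℝ :=
  Matrix.of fun σ σ' =>
    if ∀ u : ↥A, u.1 ∉ B → σ' u = σ u then
      p σ' / ∑ τ : Conf A, (if ∀ u : ↥A, u.1 ∉ B → τ u = σ u then p τ else 0)
    else 0

/-- Dirichlet form of the continuous-time dynamics driven by the resampling kernel `Kmat`. -/
def kernelDirichlet {d : ℕ} {A : Finset (Site d)} (p : Conf A → ℝ)
    (Kmat : Matrix (Conf A) (Conf A) ℝ) (φ : Conf A → ℝ) : ℝ :=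
  1 / 2 * ∑ σ : Conf A, ∑ σ' : Conf A, p σ * Kmat σ σ' * (φ σ - φ σ') ^ 2

/-- Hamming distance between two configurations. -/
def hamming {d : ℕ} {A : Finset (Site d)} (σ σ' : Conf A) : ℕ :=
  (Finset.univ.filter fun u : ↥A => σ u ≠ σ' u).card

/-- The event (as a finset of configurations) that all spins on `bd` take the value `b`. -/
def pinEvent {d : ℕ} (Λ : Finset (Site d)) (bd : Finset (Site d)) (b : Bool) :
    Finset (Conf Λ) :=
  Finset.univ.filter fun σ => ∀ u : ↥Λ, u.1 ∈ bd → σ u = b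

/-- Conditional probability that the spin at `u` is `+1`, given the event `E`. -/
def condPlusProb {d : ℕ} {Λ : Finset (Site d)} (p : Conf Λ → ℝ) (E : Finset (Conf Λ))
    (u : ↥Λ) : ℝ :=
  (∑ σ ∈ E, (if σ u = true then p σ else 0)) / ∑ σ ∈ E, p σ

/-- `δ_0(v,ℓ)`: influence of the boundary of `B_ℓ(v)` on the spin at `v`. -/
def delta0 {d : ℕ} (β : ℝ) (h : Site d → ℝ) (Λ : Finset (Site d)) (v : Site d) (ℓ : ℕ) : ℝ :=
  tvAt (gibbs β h (ball v ℓ ∩ Λ) (bdryIn Λ (ball v ℓ ∩ Λ)) fun _ => true)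
       (gibbs β h (ball v ℓ ∩ Λ) (bdryIn Λ (ball v ℓ ∩ Λ)) fun _ => false) v

/-- Ising measure on a finite graph `G` with couplings `J` and external field `h`. -/
def isingGraph {V : Type*} [Fintype V] (G : SimpleGraph V) (J : V → V → ℝ) (h : V → ℝ) :
    (V → Bool) → ℝ :=
  fun σ =>
    Real.exp (1 / 2 * ∑ u, ∑ v, (if G.Adj u v then J u v * spin (σ u) * spin (σ v) else 0)
        + ∑ u, h u * spin (σ u))
      / ∑ σ' : V → Bool,
        Real.exp (1 / 2 * ∑ u, ∑ v, (if G.Adj u v then J u v * spin (σ' u) * spin (σ' v) else 0)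
          + ∑ u, h u * spin (σ' u))

/-- Exterior vertex boundary of `A` in the graph `G`. -/
def graphBdry {V : Type*} [Fintype V] (G : SimpleGraph V) (A : Finset V) : Finset V :=
  Finset.univ.filter fun v => v ∉ A ∧ ∃ u ∈ A, G.Adj u v

/-- The event that all spins on `bd` take the value `b`. -/
def pinEventG {V : Type*} [Fintype V] (bd : Finset V) (b : Bool) : Finset (V → Bool) :=
  Finset.univ.filter fun σ => ∀ v ∈ bd, σ v = b

/-- Conditional marginal on `Δ`, given the event `E`. -/
def condMargG {V : Type*} [Fintype V] (p : (V → Bool) → ℝ) (E : Finset (V → Bool))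
    (Δ : Finset V) : (↥Δ → Bool) → ℝ :=
  fun τ => (∑ σ ∈ E, (if ∀ w : ↥Δ, σ w.1 = τ w then p σ else 0)) / ∑ σ ∈ E, p σ

/-- Conditional marginal of the single spin at `v`, given the event `E`. -/
def condMargAtG {V : Type*} [Fintype V] (p : (V → Bool) → ℝ) (E : Finset (V → Bool))
    (v : V) : Bool → ℝ :=
  fun b => (∑ σ ∈ E, (if σ v = b then p σ else 0)) / ∑ σ ∈ E, p σ

/-!
With ferromagnetic couplings the Ising energy is supermodular, so the Ising weight satisfies
Holley's lattice condition with itself; restricting it to the plus and to the minus boundary event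
gives weights `b` and `a` with `a ≼ b` and `b ≼ b` in Holley's sense, and conditioning on the spin
at a site preserves both relations. Reveal the spins of `Δ` one site `v` at a time: the distance
between the `Δ`-marginals is at most the discrepancy at `v` plus the average, over the spin at `v`,
of the distances between the conditioned marginals on the other sites. By induction these are
bounded by the conditioned single-site discrepancies, and Holley's inequality for `b` (a plus spin
at `v` makes every other spin more likely to be plus) shows that their average is at most the
unconditioned single-site discrepancy.
-/

lemma abs_mul_sub_mul_le {A B r r' : ℝ} (hA : 0 ≤ A) (hr' : 0 ≤ r') :
    |A * r - B * r'| ≤ |A - B| * r' + A * |r - r'| :=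
  calc |A * r - B * r'| = |(A - B) * r' + A * (r - r')| := by congr 1; ring
    _ ≤ |(A - B) * r'| + |A * (r - r')| := abs_add_le _ _
    _ = |A - B| * r' + A * |r - r'| := by rw [abs_mul, abs_mul, abs_of_nonneg hA, abs_of_nonneg hr']

section Weights

variable {α : Type*} [Fintype α] {a : α → ℝ} {s : Set α}

/-- The probability of `s` under the normalisation of the weight `a` (junk value `0` when `a` has
total weight `0`). -/
def prob (a : α → ℝ) (s : Set α) : ℝ := (∑ σ, s.indicator a σ) / ∑ σ, a σ

lemma prob_nonneg (ha : 0 ≤ a) (s : Set α) : 0 ≤ prob a s :=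
  div_nonneg (Finset.sum_nonneg fun σ _ => Set.indicator_nonneg (fun σ _ => ha σ) σ)
    (Finset.sum_nonneg fun σ _ => ha σ)

lemma prob_le_one (ha : 0 ≤ a) (s : Set α) : prob a s ≤ 1 :=
  div_le_one_of_le₀ (Finset.sum_le_sum fun σ _ => Set.indicator_le_self' (fun σ _ => ha σ) σ)
    (Finset.sum_nonneg fun σ _ => ha σ)

lemma prob_univ (ha : ∑ σ, a σ ≠ 0) : prob a Set.univ = 1 := by
  simp [prob, ha]

lemma prob_compl (ha : ∑ σ, a σ ≠ 0) (s : Set α) : prob a sᶜ = 1 - prob a s := by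
  rw [eq_sub_iff_add_eq, prob, prob, ← add_div, ← Finset.sum_add_distrib]
  simp [Set.indicator_compl_add_self_apply, ha]

lemma prob_pos {σ : α} (ha : 0 ≤ a) (hσ : σ ∈ s) (hpos : 0 < a σ) : 0 < prob a s :=
  div_pos
    (Finset.sum_pos' (fun τ _ => Set.indicator_nonneg (fun τ _ => ha τ) τ)
      ⟨σ, Finset.mem_univ _, by rwa [Set.indicator_of_mem hσ]⟩)
    (Finset.sum_pos' (fun τ _ => ha τ) ⟨σ, Finset.mem_univ _, hpos⟩)

lemma sum_pos_of_prob_pos (ha : 0 ≤ a) (h : 0 < prob a s) : 0 < ∑ σ, a σ :=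
  (Finset.sum_nonneg fun σ _ => ha σ).lt_of_ne fun h0 => h.ne' (by simp [prob, ← h0])

/-- No positivity is needed: if `prob a s = 0` then also `prob a (s ∩ t) = 0`. -/
lemma prob_inter (ha : 0 ≤ a) (s t : Set α) :
    prob a (s ∩ t) = prob a s * prob (s.indicator a) t := by
  have hind : t.indicator (s.indicator a) = (s ∩ t).indicator a := by
    rw [Set.indicator_indicator, Set.inter_comm]
  rcases eq_or_ne (∑ σ, s.indicator a σ) 0 with h0 | h0
  · have hst : ∑ σ, (s ∩ t).indicator a σ = 0 :=
      le_antisymm (h0 ▸ Finset.sum_le_sum fun σ _ =>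
          Set.indicator_le_indicator_of_subset Set.inter_subset_left (fun τ => ha τ) σ)
        (Finset.sum_nonneg fun σ _ => Set.indicator_nonneg (fun τ _ => ha τ) σ)
    simp [prob, hst, h0]
  · rw [prob, prob, prob, hind]
    field_simp

lemma prob_eq_add (ha : 0 ≤ a) (s t : Set α) :
    prob a t = prob a s * prob (s.indicator a) t + prob a sᶜ * prob (sᶜ.indicator a) t := by
  rw [← prob_inter ha, ← prob_inter ha, prob, prob, prob, ← add_div, ← Finset.sum_add_distrib]
  congr 1
  refine Finset.sum_congr rfl fun σ _ => ?_
  by_cases hs : σ ∈ s <;> by_cases ht : σ ∈ t <;> simp [hs, ht]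

end Weights

section Holley

variable {α : Type*} {a b : α → ℝ}

/-- Holley's lattice condition, under which the normalisation of `b` stochastically dominates that
of `a`. -/
def HolleyLE [Lattice α] (a b : α → ℝ) : Prop :=
  ∀ σ τ, a σ * b τ ≤ a (σ ⊓ τ) * b (σ ⊔ τ)

lemma HolleyLE.indicator [Lattice α] {s t : Set α} (ha : 0 ≤ a) (hb : 0 ≤ b)
    (hab : HolleyLE a b) (hst : ∀ σ ∈ s, ∀ τ ∈ t, σ ⊓ τ ∈ s ∧ σ ⊔ τ ∈ t) :
    HolleyLE (s.indicator a) (t.indicator b) := by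
  intro σ τ
  by_cases hσ : σ ∈ s <;> by_cases hτ : τ ∈ t
  · obtain ⟨hinf, hsup⟩ := hst σ hσ τ hτ
    simpa [hσ, hτ, hinf, hsup] using hab σ τ
  all_goals
    simp only [Set.indicator_of_notMem, *, zero_mul, mul_zero, not_false_eq_true]
    exact mul_nonneg (Set.indicator_nonneg (fun x _ => ha x) _)
      (Set.indicator_nonneg (fun x _ => hb x) _)

lemma HolleyLE.compl_indicator [Lattice α] {s : Set α} (hb : 0 ≤ b) (hbb : HolleyLE b b)
    (hs : IsUpperSet s) : HolleyLE (sᶜ.indicator b) (s.indicator b) :=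
  hbb.indicator hb hb fun _ hσ _ hτ =>
    ⟨fun h => hσ (hs inf_le_left h), hs le_sup_right hτ⟩

lemma HolleyLE.prob_le [DistribLattice α] [Fintype α] {s : Set α} (ha : 0 ≤ a) (hb : 0 ≤ b)
    (hab : HolleyLE a b) (hma : 0 < ∑ σ, a σ) (hmb : 0 < ∑ σ, b σ) (hs : IsUpperSet s) :
    prob a s ≤ prob b s := by
  have hμ : Monotone (s.indicator (1 : α → ℝ)) := fun σ τ hστ => by
    by_cases hσ : σ ∈ s
    · simp [hσ, hs hστ hσ]
    · simp [hσ, Set.indicator_nonneg]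
  have key := holley (μ := s.indicator 1) (f := fun σ => a σ / ∑ σ, a σ)
    (g := fun σ => b σ / ∑ σ, b σ) (Set.indicator_nonneg fun _ _ => zero_le_one)
    (fun σ => div_nonneg (ha σ) hma.le) (fun σ => div_nonneg (hb σ) hmb.le) hμ
    (by simp only [← Finset.sum_div, div_self hma.ne', div_self hmb.ne'])
    (fun σ τ => by
      simp only [div_mul_div_comm]
      exact div_le_div_of_nonneg_right (hab σ τ) (by positivity))
  simpa only [prob, Finset.sum_div, Set.indicator_apply, Pi.one_apply, ite_mul, one_mul,
    zero_mul, mul_div_assoc, ite_div, zero_div] using key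

lemma holleyLE_exp_div [Lattice α] {H : α → ℝ}
    (hH : ∀ σ τ, H σ + H τ ≤ H (σ ⊓ τ) + H (σ ⊔ τ)) (Z : ℝ) :
    HolleyLE (fun σ => Real.exp (H σ) / Z) (fun σ => Real.exp (H σ) / Z) := fun σ τ => by
  simp only [div_mul_div_comm, ← Real.exp_add]
  exact div_le_div_of_nonneg_right (Real.exp_le_exp.2 (hH σ τ)) (mul_self_nonneg Z)

end Holley

section SpinPatterns

variable {V : Type*} {v : V} {Δ S : Finset V}

def spinUp (v : V) : Set (V → Bool) := {σ | σ v = true}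

/-- A configuration of the spins in `Δ` is encoded by its set `S ⊆ Δ` of up-spins. -/
def spinPattern (Δ S : Finset V) : Set (V → Bool) := {σ | {u ∈ Δ | σ u} = S}

lemma isUpperSet_spinUp (v : V) : IsUpperSet (spinUp v) := fun σ _ hστ (hσ : σ v = true) =>
  Bool.le_iff_imp.1 (hστ v) hσ

lemma inf_mem_spinUp_and_sup_mem {σ τ : V → Bool} (hσ : σ ∈ spinUp v) (hτ : τ ∈ spinUp v) :
    σ ⊓ τ ∈ spinUp v ∧ σ ⊔ τ ∈ spinUp v := by
  simp_all [spinUp]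

lemma inf_mem_compl_spinUp_and_sup_mem {σ τ : V → Bool} (hσ : σ ∈ (spinUp v)ᶜ)
    (hτ : τ ∈ (spinUp v)ᶜ) : σ ⊓ τ ∈ (spinUp v)ᶜ ∧ σ ⊔ τ ∈ (spinUp v)ᶜ := by
  simp_all [spinUp]

lemma spinPattern_empty : spinPattern (∅ : Finset V) ∅ = Set.univ := by
  simp [spinPattern]

lemma spinPattern_insert_insert (hv : v ∉ Δ) (hS : S ⊆ Δ) :
    spinPattern (insert v Δ) (insert v S) = spinUp v ∩ spinPattern Δ S := by
  ext σ
  have hvS : v ∉ S := fun h => hv (hS h)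
  have hvF : v ∉ {u ∈ Δ | σ u} := fun h => hv (Finset.mem_filter.1 h).1
  simp only [spinPattern, spinUp, Set.mem_ofPred_eq, Set.mem_inter_iff, Finset.filter_insert]
  cases hσ : σ v
  · simp only [Bool.false_eq_true, if_false, false_and, iff_false]
    exact fun h => hvF (h ▸ Finset.mem_insert_self v S)
  · simp only [if_true, true_and]
    exact ⟨fun h => by rw [← Finset.erase_insert hvF, h, Finset.erase_insert hvS],
      by rintro rfl; rfl⟩

lemma spinPattern_insert (hv : v ∉ Δ) (hS : S ⊆ Δ) :
    spinPattern (insert v Δ) S = (spinUp v)ᶜ ∩ spinPattern Δ S := by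
  ext σ
  have hvS : v ∉ S := fun h => hv (hS h)
  simp only [spinPattern, spinUp, Set.mem_ofPred_eq, Set.mem_inter_iff, Set.mem_compl_iff,
    Finset.filter_insert]
  cases hσ : σ v
  · simp
  · simp only [if_true, not_true_eq_false, false_and, iff_false]
    exact fun h => hvS (h ▸ Finset.mem_insert_self v _)

lemma sum_agree_eq_sum_spinPattern (Δ : Finset V) (F : Set (V → Bool) → ℝ) :
    ∑ τ : ↥Δ → Bool, F {σ | ∀ w : ↥Δ, σ w = τ w} = ∑ S ∈ Δ.powerset, F (spinPattern Δ S) := by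
  symm
  refine Finset.sum_nbij' (fun S w => decide (↑w ∈ S))
    (fun τ => {u ∈ Δ | ∃ hu : u ∈ Δ, τ ⟨u, hu⟩})
    (fun _ _ => Finset.mem_univ _) (fun τ _ => Finset.mem_powerset.2 (Finset.filter_subset _ _))
    (fun S hS => ?_) (fun τ _ => ?_) (fun S hS => ?_)
  · ext u
    simpa using fun hu => Finset.mem_powerset.1 hS hu
  · funext w
    simp
  · congr 1
    ext σ
    simp only [spinPattern, Finset.ext_iff, Finset.mem_filter, Set.mem_ofPred_eq]
    refine ⟨fun h w => by simp [← h w, w.2], fun h u => ?_⟩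
    by_cases hu : u ∈ Δ
    · simp [hu, h ⟨u, hu⟩]
    · simpa [hu] using fun huS => hu (Finset.mem_powerset.1 hS huS)

end SpinPatterns

section PatternDistance

variable {V : Type*} [Fintype V] {a b : (V → Bool) → ℝ} {v : V} {Δ : Finset V}

/-- Twice the total variation distance between the laws of the spins in `Δ`. -/
def patternDist (a b : (V → Bool) → ℝ) (Δ : Finset V) : ℝ :=
  ∑ S ∈ Δ.powerset, |prob a (spinPattern Δ S) - prob b (spinPattern Δ S)|

lemma sum_prob_spinPattern (a : (V → Bool) → ℝ) (Δ : Finset V) :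
    ∑ S ∈ Δ.powerset, prob a (spinPattern Δ S) = prob a Set.univ := by
  simp only [prob, ← Finset.sum_div]
  congr 1
  rw [Finset.sum_comm]
  refine Finset.sum_congr rfl fun σ _ => ?_
  simp [spinPattern, Set.indicator_apply]

lemma sum_abs_prob_inter_spinPattern_le (ha : 0 ≤ a) (hb : 0 ≤ b) (s : Set (V → Bool))
    (Δ : Finset V) :
    ∑ S ∈ Δ.powerset, |prob a (s ∩ spinPattern Δ S) - prob b (s ∩ spinPattern Δ S)|
      ≤ |prob a s - prob b s| + prob a s * patternDist (s.indicator a) (s.indicator b) Δ := by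
  have hbs : 0 ≤ s.indicator b := Set.indicator_nonneg fun σ _ => hb σ
  simp only [prob_inter ha, prob_inter hb]
  calc _ ≤ ∑ S ∈ Δ.powerset, (|prob a s - prob b s| * prob (s.indicator b) (spinPattern Δ S)
          + prob a s * |prob (s.indicator a) (spinPattern Δ S)
            - prob (s.indicator b) (spinPattern Δ S)|) :=
        Finset.sum_le_sum fun S _ => abs_mul_sub_mul_le (prob_nonneg ha s) (prob_nonneg hbs _)
    _ = |prob a s - prob b s| * prob (s.indicator b) Set.univ
          + prob a s * patternDist (s.indicator a) (s.indicator b) Δ := by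
        rw [Finset.sum_add_distrib, ← Finset.mul_sum, ← Finset.mul_sum, sum_prob_spinPattern,
          patternDist]
    _ ≤ _ := by
        gcongr
        exact mul_le_of_le_one_right (abs_nonneg _) (prob_le_one hbs _)

lemma patternDist_insert_le (ha : 0 ≤ a) (hb : 0 ≤ b) (hv : v ∉ Δ) :
    patternDist a b (insert v Δ)
      ≤ (|prob a (spinUp v) - prob b (spinUp v)|
          + prob a (spinUp v) * patternDist ((spinUp v).indicator a) ((spinUp v).indicator b) Δ)
        + (|prob a (spinUp v)ᶜ - prob b (spinUp v)ᶜ|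
          + prob a (spinUp v)ᶜ
            * patternDist ((spinUp v)ᶜ.indicator a) ((spinUp v)ᶜ.indicator b) Δ) := by
  rw [patternDist, Finset.sum_powerset_insert hv, add_comm]
  refine add_le_add ((Finset.sum_congr rfl fun S hS => ?_).trans_le
    (sum_abs_prob_inter_spinPattern_le ha hb _ Δ)) ((Finset.sum_congr rfl fun S hS => ?_).trans_le
    (sum_abs_prob_inter_spinPattern_le ha hb _ Δ))
  · rw [spinPattern_insert_insert hv (Finset.mem_powerset.1 hS)]
  · rw [spinPattern_insert hv (Finset.mem_powerset.1 hS)]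

lemma prob_indicator_spinPattern_pos (ha : 0 ≤ a) (hv : v ∉ Δ)
    (hpos : ∀ T ⊆ insert v Δ, 0 < prob a (spinPattern (insert v Δ) T)) :
    (∀ S ⊆ Δ, 0 < prob ((spinUp v).indicator a) (spinPattern Δ S))
      ∧ ∀ S ⊆ Δ, 0 < prob ((spinUp v)ᶜ.indicator a) (spinPattern Δ S) := by
  refine ⟨fun S hS => ?_, fun S hS => ?_⟩
  · have := hpos (insert v S) (Finset.insert_subset_insert v hS)
    rw [spinPattern_insert_insert hv hS, prob_inter ha] at this
    exact pos_of_mul_pos_right this (prob_nonneg ha _)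
  · have := hpos S (hS.trans (Finset.subset_insert v Δ))
    rw [spinPattern_insert hv hS, prob_inter ha] at this
    exact pos_of_mul_pos_right this (prob_nonneg ha _)

/-- The two sides differ by
`(prob b s - prob a s) * (prob (s.indicator b) t - prob (sᶜ.indicator b) t)`. -/
lemma prob_mul_sub_add_prob_mul_sub_le {s t : Set (V → Bool)} (ha : 0 ≤ a) (hb : 0 ≤ b)
    (hma : ∑ σ, a σ ≠ 0) (hmb : ∑ σ, b σ ≠ 0) (hs : prob a s ≤ prob b s)
    (ht : prob (sᶜ.indicator b) t ≤ prob (s.indicator b) t) :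
    prob a s * (prob (s.indicator b) t - prob (s.indicator a) t)
      + prob a sᶜ * (prob (sᶜ.indicator b) t - prob (sᶜ.indicator a) t)
      ≤ prob b t - prob a t := by
  rw [prob_eq_add ha s t, prob_eq_add hb s t, prob_compl hma, prob_compl hmb]
  nlinarith [mul_nonneg (sub_nonneg.2 hs) (sub_nonneg.2 ht)]

lemma patternDist_insert_le_of_le (ha : 0 ≤ a) (hb : 0 ≤ b) (hv : v ∉ Δ)
    (hma : ∑ σ, a σ ≠ 0) (hmb : ∑ σ, b σ ≠ 0) (hv_le : prob a (spinUp v) ≤ prob b (spinUp v))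
    (hmono : ∀ u, prob ((spinUp v)ᶜ.indicator b) (spinUp u)
      ≤ prob ((spinUp v).indicator b) (spinUp u))
    (IH₁ : patternDist ((spinUp v).indicator a) ((spinUp v).indicator b) Δ
      ≤ 2 * ∑ u ∈ Δ, (prob ((spinUp v).indicator b) (spinUp u)
        - prob ((spinUp v).indicator a) (spinUp u)))
    (IH₀ : patternDist ((spinUp v)ᶜ.indicator a) ((spinUp v)ᶜ.indicator b) Δ
      ≤ 2 * ∑ u ∈ Δ, (prob ((spinUp v)ᶜ.indicator b) (spinUp u)
        - prob ((spinUp v)ᶜ.indicator a) (spinUp u))) :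
    patternDist a b (insert v Δ)
      ≤ 2 * ∑ u ∈ insert v Δ, (prob b (spinUp u) - prob a (spinUp u)) := by
  set s := spinUp v
  have habs₁ : |prob a s - prob b s| = prob b s - prob a s := by
    rw [abs_sub_comm, abs_of_nonneg (sub_nonneg.2 hv_le)]
  have habs₀ : |prob a sᶜ - prob b sᶜ| = prob b s - prob a s := by
    rw [prob_compl hma, prob_compl hmb, sub_sub_sub_cancel_left,
      abs_of_nonneg (sub_nonneg.2 hv_le)]
  have hIH₁ := mul_le_mul_of_nonneg_left IH₁ (prob_nonneg ha s)
  have hIH₀ := mul_le_mul_of_nonneg_left IH₀ (prob_nonneg ha sᶜ)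
  calc patternDist a b (insert v Δ)
      ≤ (|prob a s - prob b s| + prob a s * patternDist (s.indicator a) (s.indicator b) Δ)
        + (|prob a sᶜ - prob b sᶜ|
          + prob a sᶜ * patternDist (sᶜ.indicator a) (sᶜ.indicator b) Δ) :=
        patternDist_insert_le ha hb hv
    _ ≤ 2 * (prob b s - prob a s) + 2 * ∑ u ∈ Δ,
          (prob a s * (prob (s.indicator b) (spinUp u) - prob (s.indicator a) (spinUp u))
            + prob a sᶜ
              * (prob (sᶜ.indicator b) (spinUp u) - prob (sᶜ.indicator a) (spinUp u))) := by
        simp only [Finset.sum_add_distrib, ← Finset.mul_sum]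
        linarith
    _ ≤ 2 * (prob b s - prob a s) + 2 * ∑ u ∈ Δ, (prob b (spinUp u) - prob a (spinUp u)) := by
        gcongr with u
        exact prob_mul_sub_add_prob_mul_sub_le ha hb hma hmb hv_le (hmono u)
    _ = 2 * ∑ u ∈ insert v Δ, (prob b (spinUp u) - prob a (spinUp u)) := by
        rw [Finset.sum_insert hv]
        ring

theorem patternDist_le (ha : 0 ≤ a) (hb : 0 ≤ b) (hab : HolleyLE a b) (hbb : HolleyLE b b)
    (hpa : ∀ S ⊆ Δ, 0 < prob a (spinPattern Δ S)) (hpb : ∀ S ⊆ Δ, 0 < prob b (spinPattern Δ S)) :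
    patternDist a b Δ ≤ 2 * ∑ v ∈ Δ, (prob b (spinUp v) - prob a (spinUp v)) := by
  induction Δ using Finset.induction_on generalizing a b with
  | empty =>
    have hma := sum_pos_of_prob_pos ha (hpa ∅ (Finset.empty_subset _))
    have hmb := sum_pos_of_prob_pos hb (hpb ∅ (Finset.empty_subset _))
    simp [patternDist, spinPattern_empty, prob_univ hma.ne', prob_univ hmb.ne']
  | insert v Δ hv ih =>
    have hma := sum_pos_of_prob_pos ha (hpa ∅ (Finset.empty_subset _))
    have hmb := sum_pos_of_prob_pos hb (hpb ∅ (Finset.empty_subset _))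
    set s := spinUp v
    have ha₁ : 0 ≤ s.indicator a := Set.indicator_nonneg fun σ _ => ha σ
    have ha₀ : 0 ≤ sᶜ.indicator a := Set.indicator_nonneg fun σ _ => ha σ
    have hb₁ : 0 ≤ s.indicator b := Set.indicator_nonneg fun σ _ => hb σ
    have hb₀ : 0 ≤ sᶜ.indicator b := Set.indicator_nonneg fun σ _ => hb σ
    obtain ⟨hpa₁, hpa₀⟩ := prob_indicator_spinPattern_pos ha hv hpa
    obtain ⟨hpb₁, hpb₀⟩ := prob_indicator_spinPattern_pos hb hv hpb
    have hmb₁ := sum_pos_of_prob_pos hb₁ (hpb₁ ∅ (Finset.empty_subset _))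
    have hmb₀ := sum_pos_of_prob_pos hb₀ (hpb₀ ∅ (Finset.empty_subset _))
    refine patternDist_insert_le_of_le ha hb hv hma.ne' hmb.ne'
      (hab.prob_le ha hb hma hmb (isUpperSet_spinUp v))
      (fun u => (hbb.compl_indicator hb (isUpperSet_spinUp v)).prob_le hb₀ hb₁ hmb₀ hmb₁
        (isUpperSet_spinUp u)) ?_ ?_
    · exact ih ha₁ hb₁ (hab.indicator ha hb fun _ h _ h' => inf_mem_spinUp_and_sup_mem h h')
        (hbb.indicator hb hb fun _ h _ h' => inf_mem_spinUp_and_sup_mem h h') hpa₁ hpb₁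
    · exact ih ha₀ hb₀
        (hab.indicator ha hb fun _ h _ h' => inf_mem_compl_spinUp_and_sup_mem h h')
        (hbb.indicator hb hb fun _ h _ h' => inf_mem_compl_spinUp_and_sup_mem h h') hpa₀ hpb₀

lemma tvDist_prob_spin (hma : ∑ σ, a σ ≠ 0) (hmb : ∑ σ, b σ ≠ 0) (v : V) :
    tvDist (fun x => prob b {σ | σ v = x}) (fun x => prob a {σ | σ v = x})
      = |prob b (spinUp v) - prob a (spinUp v)| := by
  have htrue : {σ : V → Bool | σ v = true} = spinUp v := rfl
  have hfalse : {σ : V → Bool | σ v = false} = (spinUp v)ᶜ := by ext σ; simp [spinUp]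
  rw [tvDist, Fintype.sum_bool, htrue, hfalse, prob_compl hma, prob_compl hmb,
    sub_sub_sub_cancel_left, abs_sub_comm (prob a _)]
  ring

theorem tvDist_agree_le_sum (ha : 0 ≤ a) (hb : 0 ≤ b)
    (hab : HolleyLE a b) (hbb : HolleyLE b b)
    (hpa : ∀ S ⊆ Δ, 0 < prob a (spinPattern Δ S)) (hpb : ∀ S ⊆ Δ, 0 < prob b (spinPattern Δ S)) :
    tvDist (fun τ : ↥Δ → Bool => prob b {σ | ∀ w : ↥Δ, σ w = τ w})
        (fun τ => prob a {σ | ∀ w : ↥Δ, σ w = τ w})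
      ≤ ∑ v ∈ Δ, tvDist (fun x => prob b {σ | σ v = x}) (fun x => prob a {σ | σ v = x}) := by
  have hma := sum_pos_of_prob_pos ha (hpa ∅ (Finset.empty_subset _))
  have hmb := sum_pos_of_prob_pos hb (hpb ∅ (Finset.empty_subset _))
  have hL : tvDist (fun τ : ↥Δ → Bool => prob b {σ | ∀ w : ↥Δ, σ w = τ w})
      (fun τ => prob a {σ | ∀ w : ↥Δ, σ w = τ w}) = patternDist a b Δ / 2 := by
    rw [tvDist, sum_agree_eq_sum_spinPattern Δ fun s => |prob b s - prob a s|, patternDist]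
    simp_rw [abs_sub_comm (prob b _)]
    ring
  rw [hL]
  calc patternDist a b Δ / 2 ≤ ∑ v ∈ Δ, (prob b (spinUp v) - prob a (spinUp v)) := by
        linarith [patternDist_le ha hb hab hbb hpa hpb]
    _ ≤ _ := Finset.sum_le_sum fun v _ => (tvDist_prob_spin hma.ne' hmb.ne' v).symm ▸ le_abs_self _

end PatternDistance

section Pinning

variable {V : Type*} [Fintype V]

lemma prob_indicator_coe (p : (V → Bool) → ℝ) (E : Finset (V → Bool)) (s : Set (V → Bool)) :
    prob ((E : Set (V → Bool)).indicator p) s = (∑ σ ∈ E, s.indicator p σ) / ∑ σ ∈ E, p σ := by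
  rw [prob, Set.indicator_indicator, Set.inter_comm, ← Set.indicator_indicator,
    Finset.sum_indicator_subset _ (Finset.subset_univ E),
    Finset.sum_indicator_subset _ (Finset.subset_univ E)]

lemma condMargG_eq_prob (p : (V → Bool) → ℝ) (E : Finset (V → Bool)) (Δ : Finset V) :
    condMargG p E Δ
      = fun τ => prob ((E : Set (V → Bool)).indicator p) {σ | ∀ w : ↥Δ, σ w = τ w} := by
  funext τ
  simp [condMargG, prob_indicator_coe, Set.indicator_apply]

lemma condMargAtG_eq_prob (p : (V → Bool) → ℝ) (E : Finset (V → Bool)) (v : V) :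
    condMargAtG p E v = fun x => prob ((E : Set (V → Bool)).indicator p) {σ | σ v = x} := by
  funext x
  simp [condMargAtG, prob_indicator_coe, Set.indicator_apply]

lemma inf_mem_pinEventG_and_sup_mem {B : Finset V} {c c' : Bool} (hc : c ≤ c')
    {σ τ : V → Bool} (hσ : σ ∈ pinEventG B c) (hτ : τ ∈ pinEventG B c') :
    σ ⊓ τ ∈ pinEventG B c ∧ σ ⊔ τ ∈ pinEventG B c' := by
  simp_all [pinEventG]

lemma prob_pinEventG_spinPattern_pos {p : (V → Bool) → ℝ} (hp : ∀ σ, 0 < p σ)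
    {B Δ S : Finset V} (hΔB : Disjoint Δ B) (hS : S ⊆ Δ) (c : Bool) :
    0 < prob ((pinEventG B c : Set (V → Bool)).indicator p) (spinPattern Δ S) := by
  refine prob_pos (σ := fun w => if w ∈ Δ then decide (w ∈ S) else c)
    (Set.indicator_nonneg fun σ _ => (hp σ).le) ?_ ?_
  · ext u
    by_cases hu : u ∈ Δ
    · simp [hu]
    · simpa [hu] using fun h => hu (hS h)
  · rw [Set.indicator_of_mem]
    · exact hp _
    · simp only [pinEventG, Finset.coe_filter, Finset.mem_univ, true_and, Set.mem_ofPred_eq]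
      intro w hw
      simp [Finset.disjoint_right.1 hΔB hw]

theorem tvDist_condMargG_pinEventG_le {p : (V → Bool) → ℝ} (hp : ∀ σ, 0 < p σ)
    (hpp : HolleyLE p p) {Δ B : Finset V} (hΔB : Disjoint Δ B) :
    tvDist (condMargG p (pinEventG B true) Δ) (condMargG p (pinEventG B false) Δ)
      ≤ ∑ v ∈ Δ,
          tvDist (condMargAtG p (pinEventG B true) v) (condMargAtG p (pinEventG B false) v) := by
  have hp₀ : 0 ≤ p := fun σ => (hp σ).le
  have hpin (c : Bool) : 0 ≤ (pinEventG B c : Set (V → Bool)).indicator p :=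
    Set.indicator_nonneg fun σ _ => hp₀ σ
  simp only [condMargG_eq_prob, condMargAtG_eq_prob]
  exact tvDist_agree_le_sum (hpin false) (hpin true)
    (hpp.indicator hp₀ hp₀ fun _ hσ _ hτ => inf_mem_pinEventG_and_sup_mem (Bool.false_le _) hσ hτ)
    (hpp.indicator hp₀ hp₀ fun _ hσ _ hτ => inf_mem_pinEventG_and_sup_mem le_rfl hσ hτ)
    (fun S hS => prob_pinEventG_spinPattern_pos hp hΔB hS false)
    (fun S hS => prob_pinEventG_spinPattern_pos hp hΔB hS true)

end Pinning

section Ising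

variable {V : Type*} [Fintype V] (G : SimpleGraph V) (J : V → V → ℝ) (h : V → ℝ)

def isingEnergy (σ : V → Bool) : ℝ :=
  1 / 2 * ∑ u, ∑ v, (if G.Adj u v then J u v * spin (σ u) * spin (σ v) else 0)
    + ∑ u, h u * spin (σ u)

lemma isingGraph_pos (σ : V → Bool) : 0 < isingGraph G J h σ :=
  div_pos (Real.exp_pos _)
    (Finset.sum_pos (fun _ _ => Real.exp_pos _) Finset.univ_nonempty)

lemma spin_inf_add_spin_sup (x y : Bool) : spin (x ⊓ y) + spin (x ⊔ y) = spin x + spin y := by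
  cases x <;> cases y <;> norm_num [spin]

lemma spin_mul_spin_add_le (x y x' y' : Bool) :
    spin x * spin y + spin x' * spin y'
      ≤ spin (x ⊓ x') * spin (y ⊓ y') + spin (x ⊔ x') * spin (y ⊔ y') := by
  cases x <;> cases y <;> cases x' <;> cases y' <;> norm_num [spin]

variable {J} in
lemma isingEnergy_add_le (hJ : ∀ u v, 0 ≤ J u v) (σ τ : V → Bool) :
    isingEnergy G J h σ + isingEnergy G J h τ
      ≤ isingEnergy G J h (σ ⊓ τ) + isingEnergy G J h (σ ⊔ τ) := by
  have hpair : (∑ u, ∑ v, if G.Adj u v then J u v * spin (σ u) * spin (σ v) else 0)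
      + (∑ u, ∑ v, if G.Adj u v then J u v * spin (τ u) * spin (τ v) else 0)
      ≤ (∑ u, ∑ v, if G.Adj u v then J u v * spin ((σ ⊓ τ) u) * spin ((σ ⊓ τ) v) else 0)
        + (∑ u, ∑ v, if G.Adj u v then J u v * spin ((σ ⊔ τ) u) * spin ((σ ⊔ τ) v) else 0) := by
    simp only [← Finset.sum_add_distrib]
    refine Finset.sum_le_sum fun u _ => Finset.sum_le_sum fun v _ => ?_
    split_ifs
    · simpa only [mul_add, ← mul_assoc, Pi.inf_apply, Pi.sup_apply] using
        mul_le_mul_of_nonneg_left (spin_mul_spin_add_le (σ u) (σ v) (τ u) (τ v)) (hJ u v)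
    · simp
  have hfield : ∑ u, h u * spin ((σ ⊓ τ) u) + ∑ u, h u * spin ((σ ⊔ τ) u)
      = ∑ u, h u * spin (σ u) + ∑ u, h u * spin (τ u) := by
    simp only [← Finset.sum_add_distrib, ← mul_add, Pi.inf_apply, Pi.sup_apply,
      spin_inf_add_spin_sup]
  simp only [isingEnergy]
  linarith

variable {J} in
lemma holleyLE_isingGraph (hJ : ∀ u v, 0 ≤ J u v) :
    HolleyLE (isingGraph G J h) (isingGraph G J h) :=
  holleyLE_exp_div (isingEnergy_add_le G h hJ) _

lemma disjoint_graphBdry {Δ Δ' : Finset V} (hΔ : Δ ⊆ Δ') : Disjoint Δ (graphBdry G Δ') :=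
  Finset.disjoint_left.2 fun _ hv hvB => (Finset.mem_filter.1 hvB).2.1 (hΔ hv)

end Ising

theorem tv_subadditive_over_sites_general
    {V : Type} [Fintype V] (G : SimpleGraph V) (J : V → V → ℝ)
    (hJ : ∀ u v, 0 ≤ J u v) (h : V → ℝ)
    (Δ Δ' : Finset V) (hΔ : Δ ⊆ Δ') :
    tvDist (condMargG (isingGraph G J h) (pinEventG (graphBdry G Δ') true) Δ)
           (condMargG (isingGraph G J h) (pinEventG (graphBdry G Δ') false) Δ)
      ≤ ∑ v ∈ Δ,
          tvDist (condMargAtG (isingGraph G J h) (pinEventG (graphBdry G Δ') true) v)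
                 (condMargAtG (isingGraph G J h) (pinEventG (graphBdry G Δ') false) v) :=
  tvDist_condMargG_pinEventG_le (isingGraph_pos G J h) (holleyLE_isingGraph G h hJ)
    (disjoint_graphBdry G hΔ)

/-- for an Ising measure with nonnegative couplings on a finite graph, the
total variation distance between the conditional marginals on `Δ` given all-plus/all-minus
boundary spins on `∂Δ'` is at most the sum over `v ∈ Δ` of the single-site total variation
distances. -/
theorem tv_subadditive_over_sites
    {V : Type} [Fintype V] (G : SimpleGraph V) (J : V → V → ℝ)
    (hJ : ∀ u v, 0 ≤ J u v) (hJsymm : ∀ u v, J u v = J v u) (h : V → ℝ)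
    (Δ Δ' : Finset V) (hΔ : Δ ⊆ Δ') :
    tvDist (condMargG (isingGraph G J h) (pinEventG (graphBdry G Δ') true) Δ)
           (condMargG (isingGraph G J h) (pinEventG (graphBdry G Δ') false) Δ)
      ≤ ∑ v ∈ Δ,
          tvDist (condMargAtG (isingGraph G J h) (pinEventG (graphBdry G Δ') true) v)
                 (condMargAtG (isingGraph G J h) (pinEventG (graphBdry G Δ') false) v) :=
  tv_subadditive_over_sites_general G J hJ h Δ Δ' hΔ

end RFIM
end
end

section
/- For every d ≥ 1 and c > 0 there exists a constant C_0 = C_0(d,c) such that for every finite Λ ⊂ Z^d and every integer p ≥ 1, Σ_{u_1,…,u_p ∈ Λ} Π_{i=2}^{p} e^{−c √(r_i)} ≤ C_0^p · p! · |Λ|, where for each tuple, r_i := (1/4) min_{j < i} d_∞(u_i, u_j) for 2 ≤ i ≤ p, and d_∞ is the ℓ∞-distance on Z^d. -/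
open scoped BigOperators
open MeasureTheory ProbabilityTheory

noncomputable section
open scoped Classical

namespace RFIM

/-!
Each factor `exp(-c √(r_i)) = exp(-(c/2) √(min_{j<i} d_∞(u_i, u_j)))` is at most
`∑_{j<i} exp(-(c/2) √d_∞(u_i, u_j))`. Summing out `u_p, u_{p-1}, …, u_2` in turn, the `i`-th step
costs at most `(i-1) K` with `K = sup_x ∑_{y ∈ ℤ^d} exp(-(c/2) √d_∞(y, x))`, which leaves
`(p-1)! K^{p-1} |Λ|`. Finally `K` is finite: as `d · √(max_i |k_i|) ≥ ∑_i √|k_i|`, the weight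
splits into a product over coordinates, so `K ≤ (∑_{k ∈ ℤ} exp(-b √|k|))^d` for `d b ≤ c/2`, and
`exp(-b √n) = O(n⁻²)`.
-/

open Finset

lemma summable_exp_neg_mul_sqrt_nat {b : ℝ} (hb : 0 < b) :
    Summable fun n : ℕ => Real.exp (-(b * √n)) := by
  refine .of_norm_bounded_eventually_nat
    ((Real.summable_one_div_nat_pow.mpr one_lt_two).mul_left (Nat.factorial 4 / b ^ 4)) ?_
  filter_upwards [Filter.eventually_ge_atTop 1] with n hn
  have hn : (0 : ℝ) < n := by exact_mod_cast hn
  have hpow : (b * √n) ^ 4 = b ^ 4 * (n : ℝ) ^ 2 := by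
    rw [mul_pow, show √(n : ℝ) ^ 4 = (√(n : ℝ) ^ 2) ^ 2 by ring, Real.sq_sqrt hn.le]
  rw [Real.norm_of_nonneg (Real.exp_pos _).le, Real.exp_neg]
  calc (Real.exp (b * √n))⁻¹ ≤ ((b * √n) ^ 4 / Nat.factorial 4)⁻¹ :=
        inv_anti₀ (by positivity) (Real.pow_div_factorial_le_exp _ (by positivity) 4)
    _ = Nat.factorial 4 / b ^ 4 * (1 / (n : ℝ) ^ 2) := by rw [hpow]; field_simp

lemma summable_exp_neg_mul_sqrt_natAbs {b : ℝ} (hb : 0 < b) :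
    Summable fun k : ℤ => Real.exp (-(b * √k.natAbs)) := by
  have h := summable_exp_neg_mul_sqrt_nat hb
  exact .of_nat_of_neg (by simpa only [Int.natAbs_natCast] using h)
    (by simpa only [Int.natAbs_neg, Int.natAbs_natCast] using h)

lemma sum_prod_le_tsum_pow {ι G : Type*} [Fintype ι] [AddGroup G] {g : G → ℝ}
    (hg0 : ∀ k, 0 ≤ g k) (hg : Summable g) (s : Finset (ι → G)) (x : ι → G) :
    ∑ y ∈ s, ∏ i, g (y i - x i) ≤ (∑' k, g k) ^ Fintype.card ι := by
  have hshift : ∀ (t : Finset G) (m : G), ∑ k ∈ t, g (k - m) ≤ ∑' k, g k := fun t m => by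
    rw [← (Equiv.subRight m).tsum_eq]
    exact ((Equiv.subRight m).summable_iff.mpr hg).sum_le_tsum t fun k _ => hg0 _
  calc ∑ y ∈ s, ∏ i, g (y i - x i)
      ≤ ∑ y ∈ Fintype.piFinset fun i => s.image (· i), ∏ i, g (y i - x i) :=
        sum_le_sum_of_subset_of_nonneg
          (fun y hy => Fintype.mem_piFinset.mpr fun i => mem_image_of_mem _ hy)
          fun y _ _ => prod_nonneg fun i _ => hg0 _
    _ = ∏ i, ∑ k ∈ s.image (· i), g (k - x i) :=
        (prod_univ_sum (fun i => s.image (· i)) fun i k => g (k - x i)).symm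
    _ ≤ ∏ _i : ι, ∑' k, g k :=
        prod_le_prod (fun i _ => sum_nonneg fun k _ => hg0 _) fun i _ => hshift _ _
    _ = (∑' k, g k) ^ Fintype.card ι := by rw [prod_const, card_univ]

lemma exp_neg_mul_sqrt_distInf_le_prod {d : ℕ} {a b : ℝ} (hb : 0 ≤ b) (hab : d * b ≤ a)
    (y x : Site d) :
    Real.exp (-(a * √(distInf y x))) ≤ ∏ i, Real.exp (-(b * √(y i - x i).natAbs)) := by
  have hcoord : ∀ i, √((y i - x i).natAbs) ≤ √(distInf y x) := fun i =>
    Real.sqrt_le_sqrt (Nat.cast_le.mpr (le_sup (f := fun i => (y i - x i).natAbs) (mem_univ i)))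
  have hsum : ∑ i, √((y i - x i).natAbs) ≤ d * √(distInf y x) := by
    simpa using sum_le_sum fun i (_ : i ∈ univ) => hcoord i
  rw [← Real.exp_sum, Real.exp_le_exp, ← neg_le_neg_iff, neg_neg, ← sum_neg_distrib]
  simp only [neg_neg, ← mul_sum]
  calc b * ∑ i, √((y i - x i).natAbs) ≤ b * (d * √(distInf y x)) := by gcongr
    _ ≤ a * √(distInf y x) := by rw [← mul_assoc, mul_comm b]; gcongr

lemma sum_exp_neg_mul_sqrt_distInf_le {d : ℕ} {a b : ℝ} (hb : 0 < b) (hab : d * b ≤ a)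
    (Λ : Finset (Site d)) (x : Site d) :
    ∑ y ∈ Λ, Real.exp (-(a * √(distInf y x)))
      ≤ (∑' k : ℤ, Real.exp (-(b * √k.natAbs))) ^ d := by
  calc ∑ y ∈ Λ, Real.exp (-(a * √(distInf y x)))
      ≤ ∑ y ∈ Λ, ∏ i, Real.exp (-(b * √(y i - x i).natAbs)) :=
        sum_le_sum fun y _ => exp_neg_mul_sqrt_distInf_le_prod hb.le hab y x
    _ ≤ _ := by
        simpa using sum_prod_le_tsum_pow (fun k => (Real.exp_pos _).le)
          (summable_exp_neg_mul_sqrt_natAbs hb) Λ x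

lemma exists_sum_exp_neg_mul_sqrt_distInf_le (d : ℕ) {a : ℝ} (ha : 0 < a) :
    ∃ K : ℝ, 1 ≤ K ∧ ∀ (Λ : Finset (Site d)) (x : Site d),
      ∑ y ∈ Λ, Real.exp (-(a * √(distInf y x))) ≤ K := by
  have hb : 0 < a / (d + 1) := by positivity
  have hdb : d * (a / (d + 1)) ≤ a := by
    rw [mul_div_assoc', div_le_iff₀ (by positivity)]
    nlinarith
  have hT : 1 ≤ ∑' k : ℤ, Real.exp (-(a / (d + 1) * √k.natAbs)) :=
    calc (1 : ℝ) = Real.exp (-(a / (d + 1) * √(Int.natAbs 0))) := by simp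
      _ ≤ _ := (summable_exp_neg_mul_sqrt_natAbs hb).le_tsum 0 fun k _ => (Real.exp_pos _).le
  exact ⟨_, one_le_pow₀ hT, sum_exp_neg_mul_sqrt_distInf_le hb hdb⟩

lemma apply_inf'_le_sum {ι α : Type*} [LinearOrder α] {s : Finset ι} (H : s.Nonempty)
    (g : ι → α) {φ : α → ℝ} (hφ : ∀ j ∈ s, 0 ≤ φ (g j)) :
    φ (s.inf' H g) ≤ ∑ j ∈ s, φ (g j) := by
  obtain ⟨j, hj, hinf⟩ := s.exists_mem_eq_inf' H g
  rw [hinf]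
  exact single_le_sum hφ hj

lemma sum_piFinset_succ_eq_sum_snoc {α β : Type*} [AddCommMonoid β] {n : ℕ} (s : Finset α)
    (F : (Fin (n + 1) → α) → β) :
    ∑ w ∈ Fintype.piFinset fun _ => s, F w
      = ∑ w ∈ Fintype.piFinset fun _ : Fin n => s, ∑ x ∈ s, F (Fin.snoc w x) := by
  rw [← sum_product']
  refine sum_nbij' (fun w => (Fin.init w, w (Fin.last n))) (fun q => Fin.snoc q.1 q.2)
    ?_ ?_ ?_ ?_ ?_
  · intro w hw
    simp only [mem_product, Fintype.mem_piFinset] at hw ⊢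
    exact ⟨fun i => hw _, hw _⟩
  · intro q hq
    simp only [mem_product, Fintype.mem_piFinset] at hq ⊢
    exact fun i => Fin.lastCases (by simpa using hq.2) (fun i => by simpa using hq.1 i) i
  · intro w _; simp
  · intro q _; simp
  · intro w _; simp

section RecursiveTree

variable {X : Type*} (f : X → X → ℝ)

/-- Expanding the product gives a sum over the `(p-1)!` recursive trees on `Fin p`, in which
each vertex `i ≥ 1` is attached to a parent `j < i`. -/
def recursiveTreeWeight {p : ℕ} (w : Fin p → X) : ℝ :=
  ∏ i : Fin p,
    if 0 < i.1 then ∑ j ∈ univ.filter fun j : Fin p => j.1 < i.1, f (w i) (w j) else 1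

lemma sum_filter_val_lt_castSucc {n m : ℕ} (hm : m ≤ n) (h : Fin (n + 1) → ℝ) :
    ∑ j ∈ univ.filter fun j : Fin (n + 1) => j.1 < m, h j
      = ∑ j ∈ univ.filter fun j : Fin n => j.1 < m, h j.castSucc := by
  rw [sum_filter, sum_filter, Fin.sum_univ_castSucc]
  simp only [Fin.val_castSucc, Fin.val_last]
  rw [if_neg (by omega), add_zero]

lemma recursiveTreeWeight_snoc {p : ℕ} (w : Fin (p + 1) → X) (x : X) :
    recursiveTreeWeight f (Fin.snoc w x : Fin (p + 2) → X)
      = recursiveTreeWeight f w * ∑ j, f x (w j) := by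
  unfold recursiveTreeWeight
  rw [Fin.prod_univ_castSucc]
  congr 1
  · refine prod_congr rfl fun i _ => ?_
    simp only [Fin.val_castSucc]
    split_ifs
    · rw [sum_filter_val_lt_castSucc (by omega)]
      simp only [Fin.snoc_castSucc]
    · rfl
  · rw [if_pos (by simp), Fin.val_last, sum_filter_val_lt_castSucc le_rfl,
      filter_true_of_mem fun j _ => j.isLt]
    simp only [Fin.snoc_last, Fin.snoc_castSucc]

variable {f}

lemma recursiveTreeWeight_nonneg (hf : ∀ a b, 0 ≤ f a b) {p : ℕ} (w : Fin p → X) :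
    0 ≤ recursiveTreeWeight f w :=
  prod_nonneg fun i _ => by
    split_ifs
    exacts [sum_nonneg fun j _ => hf _ _, zero_le_one]

lemma sum_recursiveTreeWeight_le (hf : ∀ a b, 0 ≤ f a b) {K : ℝ} (hK : 0 ≤ K) {s : Finset X}
    (hs : ∀ x ∈ s, ∑ y ∈ s, f y x ≤ K) (n : ℕ) :
    ∑ w ∈ Fintype.piFinset fun _ : Fin (n + 1) => s, recursiveTreeWeight f w
      ≤ n.factorial * K ^ n * s.card := by
  induction n with
  | zero => simp [recursiveTreeWeight]
  | succ n ih =>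
    have hlast : ∀ w ∈ Fintype.piFinset fun _ : Fin (n + 1) => s,
        ∑ x ∈ s, ∑ j, f x (w j) ≤ (n + 1) * K := fun w hw => by
      rw [sum_comm]
      simpa using sum_le_sum fun j (_ : j ∈ univ) => hs _ (Fintype.mem_piFinset.mp hw j)
    calc ∑ w ∈ Fintype.piFinset fun _ : Fin (n + 2) => s, recursiveTreeWeight f w
        = ∑ w ∈ Fintype.piFinset fun _ : Fin (n + 1) => s,
            recursiveTreeWeight f w * ∑ x ∈ s, ∑ j, f x (w j) := by
          simp only [sum_piFinset_succ_eq_sum_snoc, recursiveTreeWeight_snoc, mul_sum]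
      _ ≤ ∑ w ∈ Fintype.piFinset fun _ : Fin (n + 1) => s,
            recursiveTreeWeight f w * ((n + 1) * K) :=
          sum_le_sum fun w hw =>
            mul_le_mul_of_nonneg_left (hlast w hw) (recursiveTreeWeight_nonneg hf w)
      _ ≤ n.factorial * K ^ n * s.card * ((n + 1) * K) := by
          rw [← sum_mul]; gcongr
      _ = (n + 1).factorial * K ^ (n + 1) * s.card := by
          push_cast [Nat.factorial_succ]; ring

end RecursiveTree

theorem exponential_tuple_counting_general (d : ℕ) (c : ℝ) (hc : 0 < c) :
    ∃ C₀ : ℝ, 0 < C₀ ∧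
      ∀ (Λ : Finset (Site d)) (p : ℕ), 1 ≤ p →
        (∑ u ∈ Fintype.piFinset fun _ : Fin p => Λ,
          ∏ i : Fin p,
            (if hi : 0 < i.1 then
              Real.exp (-c * Real.sqrt (1 / 4 *
                ((Finset.univ.filter fun j : Fin p => j.1 < i.1).inf'
                  ⟨⟨0, i.pos⟩, Finset.mem_filter.2 ⟨Finset.mem_univ _, hi⟩⟩
                  fun j => (distInf (u i) (u j) : ℝ))))
             else 1))
          ≤ C₀ ^ p * (Nat.factorial p : ℝ) * (Λ.card : ℝ) := by
  obtain ⟨K, hK1, hK⟩ := exists_sum_exp_neg_mul_sqrt_distInf_le d (half_pos hc)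
  refine ⟨K, by positivity, fun Λ p hp => ?_⟩
  obtain ⟨n, rfl⟩ := Nat.exists_eq_add_of_le' hp
  set f : Site d → Site d → ℝ := fun y x => Real.exp (-c * √(1 / 4 * (distInf y x : ℝ)))
  have hf : ∀ y x, f y x = Real.exp (-(c / 2 * √(distInf y x))) := fun y x => by
    have : √(1 / 4 : ℝ) = 1 / 2 := by
      rw [show (1 / 4 : ℝ) = (1 / 2) ^ 2 by norm_num]; exact Real.sqrt_sq (by norm_num)
    simp only [f, Real.sqrt_mul (by norm_num : (0 : ℝ) ≤ 1 / 4), this]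
    ring_nf
  calc _ ≤ ∑ u ∈ Fintype.piFinset fun _ : Fin (n + 1) => Λ, recursiveTreeWeight f u := by
        refine sum_le_sum fun u _ => prod_le_prod (fun i _ => by split_ifs <;> positivity)
          fun i _ => ?_
        split_ifs
        · exact apply_inf'_le_sum _ _ (φ := fun t => Real.exp (-c * √(1 / 4 * t)))
            fun j _ => (Real.exp_pos _).le
        · rfl
    _ ≤ n.factorial * K ^ n * Λ.card :=
        sum_recursiveTreeWeight_le (fun _ _ => (Real.exp_pos _).le) (by positivity)
          (fun x _ => (sum_congr rfl fun y _ => hf y x).trans_le (hK Λ x)) n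
    _ ≤ K ^ (n + 1) * (n + 1).factorial * Λ.card := by
        rw [mul_comm (K ^ (n + 1))]
        gcongr
        exacts [n.le_succ, n.le_succ]

/-- the combinatorial counting bound
`Σ_{u_1,…,u_p ∈ Λ} Π_{i≥2} e^{-c √(r_i)} ≤ C₀^p p! |Λ|`, with
`r_i = (1/4) min_{j<i} d_∞(u_i,u_j)`. -/
theorem exponential_tuple_counting (d : ℕ) (hd : 1 ≤ d) (c : ℝ) (hc : 0 < c) :
    ∃ C₀ : ℝ, 0 < C₀ ∧
      ∀ (Λ : Finset (Site d)) (p : ℕ), 1 ≤ p →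
        (∑ u ∈ Fintype.piFinset fun _ : Fin p => Λ,
          ∏ i : Fin p,
            (if hi : 0 < i.1 then
              Real.exp (-c * Real.sqrt (1 / 4 *
                ((Finset.univ.filter fun j : Fin p => j.1 < i.1).inf'
                  ⟨⟨0, i.pos⟩, Finset.mem_filter.2 ⟨Finset.mem_univ _, hi⟩⟩
                  fun j => (distInf (u i) (u j) : ℝ))))
             else 1))
          ≤ C₀ ^ p * (Nat.factorial p : ℝ) * (Λ.card : ℝ) :=
  exponential_tuple_counting_general d c hc

end RFIM
end
end

section
/- Fix d ≥ 2, β > 0, and K > 0 such that ρ = ρ(β,d,K) := e^{2dβ−K}/(e^{2dβ−K} + e^{−2dβ+K}) < 1/(40d), and suppose the field (h_x)_{x∈Λ_n} has i.i.d. absolute values with P_h(|h_x| ≤ K) < 1/(40d). Let ω^h_x = 1_{|h_x| ≤ K}, let (η_x)_{x∈Λ_n} be i.i.d. Bernoulli(ρ) independent of h, and let ω^i_x = ω^h_x ∨ η_x. Call a vertex v ∈ Λ_n^{(R)} = Λ_n ∩ R·Z^d Good if for every w in the ℓ∞-ball B_R(v) of radius R around v and every r with (log R)² ≤ r ≤ R/8,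 one has P( |C_w(ω^i)| ≥ r | ω^h ) ≤ e^{−r}, where C_w(ω^i) is the nearest-neighbor connected component of w in {x : ω^i_x = 1}; otherwise call v Bad. Then there is a constant R_0(d) such that for all R ≥ R_0(d) and every v ∈ Λ_n^{(R)}, P_h( v is Bad ) ≤ R^{−5}. -/
/-!
A vertex `v` is bad only if for some `w ∈ B_R(v)` and some `r ≥ (log R)²` the quenched
probability `P(|C_w| ≥ r | ω^h)` exceeds `e^{-r}`. By Markov's inequality in `h` this has
`P_h`-probability at most `e^r` times the annealed probability `P(|C_w| ≥ r)`. A cluster of at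
least `r` sites contains an animal of exactly `r` open sites rooted at `w`. Breadth-first search
encodes such an animal injectively by an `(r - 1)`-subset of `{0, …, r - 1} × {±e_i}`, so there
are at most `C(2dr, r - 1) ≤ e^r (2d)^(r - 1)` of them, and since the sites are independent each
is open with probability at most `(1/(40d) + 1/(40d))^r`. This bounds the annealed probability by
`(e²/10)^r`, and a union bound over the `(2R + 1)^d` sites `w` and the `R + 1` radii leaves
`(2R + 1)^d (R + 1) (e²/10)^((log R)²)`, which is below `R^(-5)` for large `R`.
-/

open scoped BigOperators
open MeasureTheory ProbabilityTheory

noncomputable section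
open scoped Classical

namespace RFIM

open Finset
open scoped ENNReal

lemma exists_rel_mem_notMem_of_reflTransGen {α : Type*} {r : α → α → Prop} {s : Set α}
    {a b : α} (hab : Relation.ReflTransGen r a b) (ha : a ∈ s) (hb : b ∉ s) :
    ∃ x ∈ s, ∃ y ∉ s, r x y := by
  induction hab with
  | refl => exact absurd ha hb
  | @tail y z _ hyz ih =>
    by_cases hy : y ∈ s
    · exact ⟨y, hy, z, hb, hyz⟩
    · exact ih hy

section Animal

variable {V : Type*} (adj : V → V → Prop)

def AdjWithin (T : Finset V) (a b : V) : Prop := a ∈ T ∧ b ∈ T ∧ adj a b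

def IsAnimal (w : V) (T : Finset V) : Prop :=
  w ∈ T ∧ ∀ x ∈ T, Relation.ReflTransGen (AdjWithin adj T) w x

variable {adj}

lemma isAnimal_singleton (w : V) : IsAnimal adj w {w} :=
  ⟨mem_singleton_self w, fun x hx => by rw [mem_singleton.1 hx]⟩

protected lemma IsAnimal.insert [DecidableEq V] {w a b : V} {T : Finset V}
    (hT : IsAnimal adj w T) (ha : a ∈ T) (hab : adj a b) : IsAnimal adj w (insert b T) := by
  have hmono : ∀ {x}, Relation.ReflTransGen (AdjWithin adj T) w x →
      Relation.ReflTransGen (AdjWithin adj (insert b T)) w x :=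
    Relation.ReflTransGen.mono (fun _ _ hxy =>
      ⟨mem_insert_of_mem hxy.1, mem_insert_of_mem hxy.2.1, hxy.2.2⟩) _ _
  refine ⟨mem_insert_of_mem hT.1, fun x hx => ?_⟩
  rcases mem_insert.1 hx with rfl | hx
  · exact (hmono (hT.2 a ha)).tail ⟨mem_insert_of_mem ha, mem_insert_self _ _, hab⟩
  · exact hmono (hT.2 x hx)

end Animal

section Exploration

variable {V D : Type*} (nbr : V → D → V)

/-- Exploration driven by a choice of directions `ch`: breadth-first search (`bfsDirs`) and its
replay from a code (`decodeDirs`) are both instances. -/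
def explore (ch : ℕ → List V → V → List D) (w : V) : ℕ → List V
  | 0 => [w]
  | k + 1 =>
    let L := explore ch w k
    if hk : k < L.length then L ++ (ch k L L[k]).map (nbr L[k]) else L

def exploreDirs (ch : ℕ → List V → V → List D) (w : V) (k : ℕ) : List D :=
  if hk : k < (explore nbr ch w k).length then
    ch k (explore nbr ch w k) (explore nbr ch w k)[k] else []

variable {nbr} {ch : ℕ → List V → V → List D} {w : V}

lemma explore_succ_of_lt {k : ℕ} (hk : k < (explore nbr ch w k).length) :
    explore nbr ch w (k + 1) = explore nbr ch w k ++
      (ch k (explore nbr ch w k) (explore nbr ch w k)[k]).map (nbr (explore nbr ch w k)[k]) :=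
  dif_pos hk

lemma explore_succ_of_le {k : ℕ} (hk : (explore nbr ch w k).length ≤ k) :
    explore nbr ch w (k + 1) = explore nbr ch w k :=
  dif_neg (not_lt.2 hk)

lemma length_explore (r : ℕ) :
    (explore nbr ch w r).length = 1 + ∑ k ∈ range r, (exploreDirs nbr ch w k).length := by
  induction r with
  | zero => rfl
  | succ k ih =>
    rw [sum_range_succ, exploreDirs]
    split_ifs with hk
    · rw [explore_succ_of_lt hk, List.length_append, List.length_map, ih]; ring
    · rw [explore_succ_of_le (not_lt.1 hk), ih, List.length_nil, add_zero]

lemma explore_prefix {j k : ℕ} (hjk : j ≤ k) : explore nbr ch w j <+: explore nbr ch w k := by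
  induction k, hjk using Nat.le_induction with
  | base => exact List.prefix_refl _
  | succ k _ ih =>
    refine ih.trans ?_
    by_cases hk : k < (explore nbr ch w k).length
    · rw [explore_succ_of_lt hk]; exact List.prefix_append _ _
    · rw [explore_succ_of_le (not_lt.1 hk)]

lemma explore_eq_of_length_le {k m : ℕ} (hk : (explore nbr ch w k).length ≤ k) (hkm : k ≤ m) :
    explore nbr ch w m = explore nbr ch w k := by
  induction m, hkm using Nat.le_induction with
  | base => rfl
  | succ m hkm ih => rw [explore_succ_of_le (by rw [ih]; omega), ih]

/-- Once all discovered vertices have been processed, the exploration stops for good. -/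
lemma lt_length_explore {j r : ℕ} (hjr : j ≤ r) (hj : j < (explore nbr ch w r).length) :
    j < (explore nbr ch w j).length := by
  by_contra h
  rw [explore_eq_of_length_le (not_lt.1 h) hjr] at hj
  exact h hj

end Exploration

section BreadthFirst

variable {V D : Type*} [Fintype D] (nbr : V → D → V)

def bfsDirs (T : Finset V) : ℕ → List V → V → List D :=
  fun _ L v => univ.toList.filter fun p => nbr v p ∈ T ∧ nbr v p ∉ L

variable {nbr} {T : Finset V} {w : V}

lemma mem_bfsDirs {k : ℕ} {L : List V} {v : V} {p : D} :
    p ∈ bfsDirs nbr T k L v ↔ nbr v p ∈ T ∧ nbr v p ∉ L := by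
  simp [bfsDirs]

lemma mem_of_mem_bfs (hw : w ∈ T) (k : ℕ) : ∀ x ∈ explore nbr (bfsDirs nbr T) w k, x ∈ T := by
  induction k with
  | zero => simpa [explore]
  | succ k ih =>
    intro x hx
    by_cases hk : k < (explore nbr (bfsDirs nbr T) w k).length
    · rw [explore_succ_of_lt hk, List.mem_append, List.mem_map] at hx
      rcases hx with hx | ⟨p, hp, rfl⟩
      exacts [ih x hx, (mem_bfsDirs.1 hp).1]
    · rw [explore_succ_of_le (not_lt.1 hk)] at hx
      exact ih x hx

lemma nodup_bfs (hinj : ∀ v, Function.Injective (nbr v)) (k : ℕ) :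
    (explore nbr (bfsDirs nbr T) w k).Nodup := by
  induction k with
  | zero => exact List.nodup_singleton w
  | succ k ih =>
    by_cases hk : k < (explore nbr (bfsDirs nbr T) w k).length
    · rw [explore_succ_of_lt hk]
      refine ih.append (((nodup_toList _).filter _).map (hinj _)) fun x hxL hx => ?_
      obtain ⟨p, hp, rfl⟩ := List.mem_map.1 hx
      exact (mem_bfsDirs.1 hp).2 hxL
    · rwa [explore_succ_of_le (not_lt.1 hk)]

lemma nbr_mem_bfs {r : ℕ} (hr : (explore nbr (bfsDirs nbr T) w r).length ≤ r) {m : V}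
    (hm : m ∈ explore nbr (bfsDirs nbr T) w r) {p : D} (hp : nbr m p ∈ T) :
    nbr m p ∈ explore nbr (bfsDirs nbr T) w r := by
  obtain ⟨j, hj, rfl⟩ := List.mem_iff_getElem.1 hm
  have hjr : j < r := hj.trans_le hr
  have hjj : j < (explore nbr (bfsDirs nbr T) w j).length := lt_length_explore hjr.le hj
  have hget : (explore nbr (bfsDirs nbr T) w r)[j] = (explore nbr (bfsDirs nbr T) w j)[j] :=
    ((explore_prefix hjr.le).getElem hjj).symm
  rw [hget] at hp ⊢
  by_cases hnew : nbr (explore nbr (bfsDirs nbr T) w j)[j] p ∈ explore nbr (bfsDirs nbr T) w j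
  · exact (explore_prefix hjr.le).subset hnew
  · refine (explore_prefix (Nat.succ_le_of_lt hjr)).subset ?_
    rw [explore_succ_of_lt hjj]
    exact List.mem_append_right _ (List.mem_map_of_mem (mem_bfsDirs.2 ⟨hp, hnew⟩))

variable {adj : V → V → Prop}

lemma toFinset_bfs (hinj : ∀ v, Function.Injective (nbr v))
    (hadj : ∀ a b, adj a b → ∃ p, nbr a p = b) (hT : IsAnimal adj w T) :
    (explore nbr (bfsDirs nbr T) w T.card).toFinset = T := by
  have hsub : (explore nbr (bfsDirs nbr T) w T.card).toFinset ⊆ T := fun x hx =>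
    mem_of_mem_bfs hT.1 _ x (List.mem_toFinset.1 hx)
  have hlen : (explore nbr (bfsDirs nbr T) w T.card).length ≤ T.card := by
    rw [← List.toFinset_card_of_nodup (nodup_bfs hinj _)]
    exact card_le_card hsub
  refine hsub.antisymm fun x hx => List.mem_toFinset.2 ?_
  have hwx := hT.2 x hx
  clear hx
  induction hwx with
  | refl => exact (explore_prefix (Nat.zero_le _)).subset (List.mem_singleton_self w)
  | @tail y z _ hyz ih =>
    obtain ⟨p, rfl⟩ := hadj y z hyz.2.2
    exact nbr_mem_bfs hlen ih hyz.2.1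

lemma length_bfs (hinj : ∀ v, Function.Injective (nbr v))
    (hadj : ∀ a b, adj a b → ∃ p, nbr a p = b) (hT : IsAnimal adj w T) :
    (explore nbr (bfsDirs nbr T) w T.card).length = T.card := by
  conv_rhs => rw [← toFinset_bfs hinj hadj hT]
  exact (List.toFinset_card_of_nodup (nodup_bfs hinj _)).symm

end BreadthFirst

section Encoding

variable {V D : Type*} [Fintype D]

def bfsCode (nbr : V → D → V) (T : Finset V) (w : V) (r : ℕ) : Finset (ℕ × D) :=
  (range r ×ˢ univ).filter fun kp => kp.2 ∈ exploreDirs nbr (bfsDirs nbr T) w kp.1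

def decodeDirs (c : Finset (ℕ × D)) : ℕ → List V → V → List D :=
  fun k _ _ => univ.toList.filter fun p => (k, p) ∈ c

variable {nbr : V → D → V} {T : Finset V} {w : V}

lemma explore_decodeDirs_bfsCode {k r : ℕ} (hkr : k ≤ r) :
    explore nbr (decodeDirs (bfsCode nbr T w r)) w k = explore nbr (bfsDirs nbr T) w k := by
  induction k with
  | zero => rfl
  | succ k ih =>
    have ih := ih (by omega)
    by_cases hk : k < (explore nbr (bfsDirs nbr T) w k).length
    · rw [explore_succ_of_lt (ih ▸ hk), explore_succ_of_lt hk]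
      simp only [ih]
      congr 2
      refine List.filter_congr fun p hp => ?_
      simp [bfsCode, exploreDirs, hk, bfsDirs, mem_toList.1 hp, Nat.lt_of_succ_le hkr]
    · rw [explore_succ_of_le (ih ▸ not_lt.1 hk), explore_succ_of_le (not_lt.1 hk), ih]

lemma nodup_exploreDirs_bfsDirs (k : ℕ) : (exploreDirs nbr (bfsDirs nbr T) w k).Nodup := by
  unfold exploreDirs
  split_ifs
  exacts [(nodup_toList _).filter _, List.nodup_nil]

lemma card_bfsCode (r : ℕ) :
    (bfsCode nbr T w r).card = ∑ k ∈ range r, (exploreDirs nbr (bfsDirs nbr T) w k).length := by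
  rw [bfsCode, card_filter, sum_product]
  refine sum_congr rfl fun k _ => ?_
  rw [sum_boole, Nat.cast_id, ← List.toFinset_card_of_nodup (nodup_exploreDirs_bfsDirs k)]
  congr 1
  ext p
  simp

/-- An animal of size `r` is recovered from its `bfsCode`, an `(r - 1)`-subset of
`range r ×ˢ D`. -/
theorem exists_finset_isAnimal_card_le {adj : V → V → Prop}
    (hinj : ∀ v, Function.Injective (nbr v)) (hadj : ∀ a b, adj a b → ∃ p, nbr a p = b)
    (w : V) (r : ℕ) :
    ∃ 𝒯 : Finset (Finset V), 𝒯.card ≤ (r * Fintype.card D).choose (r - 1) ∧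
      ∀ T, T ∈ 𝒯 ↔ T.card = r ∧ IsAnimal adj w T := by
  refine ⟨((powersetCard (r - 1) (range r ×ˢ univ)).image
    fun c => (explore nbr (decodeDirs c) w r).toFinset).filter
      fun T => T.card = r ∧ IsAnimal adj w T, ?_, fun T => ?_⟩
  · calc _ ≤ _ := card_filter_le _ _
      _ ≤ _ := card_image_le
      _ = _ := by rw [card_powersetCard, card_product, card_range, card_univ]
  · rw [mem_filter, and_iff_right_iff_imp, mem_image]
    rintro ⟨rfl, hT⟩
    refine ⟨bfsCode nbr T w T.card, mem_powersetCard.2 ⟨filter_subset _ _, ?_⟩, ?_⟩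
    · have hlen := length_bfs hinj hadj hT
      rw [length_explore] at hlen
      rw [card_bfsCode]
      omega
    · rw [explore_decodeDirs_bfsCode le_rfl, toFinset_bfs hinj hadj hT]

end Encoding

section Lattice

variable {d : ℕ}

def latticeNbr (x : Site d) (p : Fin d × Bool) : Site d :=
  Function.update x p.1 (x p.1 + if p.2 then 1 else -1)

lemma latticeNbr_injective (x : Site d) : Function.Injective (latticeNbr x) := by
  rintro ⟨i, b⟩ ⟨j, c⟩ h
  have hi := congrFun h i
  by_cases hij : i = j
  · subst hij
    cases b <;> cases c <;> simp_all [latticeNbr]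
  · cases b <;> cases c <;> simp [latticeNbr, hij] at hi

lemma exists_latticeNbr_eq_of_adj {x y : Site d} (h : Adj x y) : ∃ p, latticeNbr x p = y := by
  obtain ⟨i, hi⟩ : ∃ i, (x i - y i).natAbs ≠ 0 := by
    by_contra! h0
    simp [Adj, h0] at h
  have hzero : ∀ j ≠ i, x j = y j := by
    intro j hj
    have hpair := sum_pair (f := fun k => (x k - y k).natAbs) hj.symm
    have := sum_le_sum_of_subset (f := fun k => (x k - y k).natAbs) (subset_univ {i, j})
    rw [Adj] at h
    omega
  have hone : (x i - y i).natAbs = 1 := by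
    have := single_le_sum (f := fun k => (x k - y k).natAbs) (fun _ _ => Nat.zero_le _)
      (mem_univ i)
    rw [Adj] at h
    omega
  refine ⟨(i, decide (y i = x i + 1)), funext fun j => ?_⟩
  by_cases hj : j = i
  · subst hj
    rcases Int.natAbs_eq_iff.1 hone with h1 | h1 <;>
      simp [latticeNbr] <;> omega
  · simp [latticeNbr, hj, hzero j hj]

lemma exists_isAnimal_of_clusterAtLeast {c : Site d → Bool} {w : Site d} {r : ℕ} (hr : 1 ≤ r)
    (h : clusterAtLeast c w r) :
    ∃ T : Finset (Site d), T.card = r ∧ IsAnimal Adj w T ∧ ∀ x ∈ T, c x = true := by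
  obtain ⟨S, hw, hS, hrS⟩ := h
  suffices ∀ k < r, ∃ T : Finset (Site d), T.card = k + 1 ∧ IsAnimal Adj w T ∧
      ∀ x ∈ T, c x = true by
    simpa [Nat.sub_add_cancel hr] using this (r - 1) (by omega)
  intro k hk
  induction k with
  | zero => exact ⟨{w}, card_singleton w, isAnimal_singleton w, by simpa⟩
  | succ k ih =>
    obtain ⟨T, hcard, hT, hopen⟩ := ih (by omega)
    obtain ⟨y, hyS, hyT⟩ : ∃ y ∈ S, y ∉ T :=
      not_subset.1 fun hST => by have := card_le_card hST; omega
    obtain ⟨a, ha, b, hb, hab⟩ :=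
      exists_rel_mem_notMem_of_reflTransGen (s := ↑T) (hS y hyS) hT.1 hyT
    refine ⟨insert b T, by rw [card_insert_of_notMem hb, hcard], hT.insert ha hab.1, ?_⟩
    simpa [hab.2.2] using hopen

lemma card_ball (o : Site d) (R : ℕ) : (ball o R).card = (2 * R + 1) ^ d := by
  have hIcc : ∀ i, (Icc (o i - R) (o i + R)).card = 2 * R + 1 := fun i => by
    rw [Int.card_Icc]
    omega
  simp [ball, Fintype.card_piFinset, hIcc]

end Lattice

section Probability

variable {Ω Ω' : Type*} [MeasurableSpace Ω] [MeasurableSpace Ω'] {P : Measure Ω}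
  {P' : Measure Ω'}

lemma iIndepSet_preimage_of_iIndepFun {ι β : Type*} [MeasurableSpace β] {f : ι → Ω → β}
    (hf : iIndepFun f P) (hfm : ∀ i, Measurable (f i)) {s : Set β} (hs : MeasurableSet s) :
    iIndepSet (fun i => f i ⁻¹' s) P :=
  (iIndepSet_iff_meas_biInter fun i => hfm i hs).2 fun S =>
    hf.measure_inter_preimage_eq_mul S fun _ _ => hs

lemma measure_prod_forall_mem_or_mem_le {ι : Type*} {A : ι → Set Ω} {B : ι → Set Ω'}
    (hA : iIndepSet A P) (hB : iIndepSet B P') {q q' : ℝ≥0∞} (hqA : ∀ i, P (A i) ≤ q)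
    (hqB : ∀ i, P' (B i) ≤ q') (T : Finset ι) :
    P.prod P' {p | ∀ i ∈ T, p.1 ∈ A i ∨ p.2 ∈ B i} ≤ (q + q') ^ T.card := by
  calc P.prod P' {p | ∀ i ∈ T, p.1 ∈ A i ∨ p.2 ∈ B i}
      ≤ P.prod P' (⋃ S ∈ T.powerset, (⋂ i ∈ S, A i) ×ˢ ⋂ i ∈ T \ S, B i) := by
        refine measure_mono fun p hp => Set.mem_iUnion₂.2
          ⟨T.filter (p.1 ∈ A ·), mem_powerset.2 (filter_subset _ _), ?_⟩
        simp only [Set.mem_prod, Set.mem_iInter, mem_filter, mem_sdiff]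
        exact ⟨fun i hi => hi.2, fun i hi => (hp i hi.1).resolve_left fun hA => hi.2 ⟨hi.1, hA⟩⟩
    _ ≤ ∑ S ∈ T.powerset, P (⋂ i ∈ S, A i) * P' (⋂ i ∈ T \ S, B i) :=
        (measure_biUnion_finset_le _ _).trans (sum_le_sum fun S _ => Measure.prod_prod_le _ _)
    _ ≤ ∑ S ∈ T.powerset, (∏ _i ∈ S, q) * ∏ _i ∈ T \ S, q' := by
        gcongr with S
        · rw [hA.meas_biInter]
          exact prod_le_prod' fun i _ => hqA i
        · rw [hB.meas_biInter]
          exact prod_le_prod' fun i _ => hqB i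
    _ = (q + q') ^ T.card := by rw [← prod_add, prod_const]

lemma meas_ge_measure_prodMk_preimage_le_div [SFinite P'] {F : Set (Ω × Ω')}
    (hF : MeasurableSet F) {ε : ℝ≥0∞} (hε : ε ≠ 0) (hε' : ε ≠ ∞) :
    P {ω | ε ≤ P' (Prod.mk ω ⁻¹' F)} ≤ P.prod P' F / ε := by
  rw [Measure.prod_apply hF]
  exact meas_ge_le_lintegral_div (measurable_measure_prodMk_left hF).aemeasurable hε hε'

variable {d : ℕ} {K : ℝ} {h : Ω → Site d → ℝ} {η : Ω' → Site d → Bool}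

lemma omI_eq_true_iff (f : Site d → ℝ) (e : Site d → Bool) (x : Site d) :
    omI K f e x = true ↔ |f x| ≤ K ∨ e x = true := by
  unfold omI
  split_ifs with hx <;> simp [hx]

/-- Markov's inequality in `h` turns the quenched cluster tail into the annealed one, which a
union bound over lattice animals controls. -/
lemma meas_lt_measure_clusterAtLeast_le [SFinite P']
    (hh : ∀ x, Measurable fun ω => h ω x) (hhind : iIndepFun (fun x ω => |h ω x|) P)
    {q q' : ℝ≥0∞} (hq : ∀ x, P {ω | |h ω x| ≤ K} ≤ q)
    (hη : ∀ x, Measurable fun ω' => η ω' x) (hηind : iIndepFun (fun x ω' => η ω' x) P')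
    (hq' : ∀ x, P' {ω' | η ω' x = true} ≤ q') (w : Site d) {r : ℕ} (hr : 1 ≤ r) :
    P {ω | ENNReal.ofReal (Real.exp (-r)) < P' {ω' | clusterAtLeast (omI K (h ω) (η ω')) w r}}
      ≤ ENNReal.ofReal (Real.exp r) * (r * (2 * d)).choose (r - 1) * (q + q') ^ r := by
  obtain ⟨𝒯, h𝒯card, h𝒯⟩ := exists_finset_isAnimal_card_le latticeNbr_injective
    (fun _ _ => exists_latticeNbr_eq_of_adj) w r
  rw [Fintype.card_prod, Fintype.card_fin, Fintype.card_bool, mul_comm d] at h𝒯card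
  set A : Site d → Set Ω := fun x => {ω | |h ω x| ≤ K}
  set B : Site d → Set Ω' := fun x => {ω' | η ω' x = true}
  set F : Set (Ω × Ω') := ⋃ T ∈ 𝒯, {p | ∀ x ∈ T, p.1 ∈ A x ∨ p.2 ∈ B x}
  have hA : iIndepSet A P := iIndepSet_preimage_of_iIndepFun hhind
    (fun x => continuous_abs.measurable.comp (hh x)) measurableSet_Iic
  have hB : iIndepSet B P' := iIndepSet_preimage_of_iIndepFun hηind hη (measurableSet_singleton _)
  have hF : MeasurableSet F := by
    refine .biUnion 𝒯.countable_toSet fun T _ => ?_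
    simp_rw [Set.ofPred_forall]
    exact .biInter T.countable_toSet fun x _ => .union
      (measurable_fst (measurableSet_le (hh x).abs measurable_const))
      (measurable_snd (hη x (measurableSet_singleton true)))
  have hsub : ∀ ω, {ω' | clusterAtLeast (omI K (h ω) (η ω')) w r} ⊆ Prod.mk ω ⁻¹' F := by
    intro ω ω' hω'
    obtain ⟨T, hTcard, hT, hopen⟩ := exists_isAnimal_of_clusterAtLeast hr hω'
    exact Set.mem_iUnion₂.2 ⟨T, (h𝒯 T).2 ⟨hTcard, hT⟩,
      fun x hx => (omI_eq_true_iff _ _ x).1 (hopen x hx)⟩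
  have hFle : P.prod P' F ≤ (r * (2 * d)).choose (r - 1) * (q + q') ^ r := by
    calc P.prod P' F ≤ ∑ T ∈ 𝒯, P.prod P' {p | ∀ x ∈ T, p.1 ∈ A x ∨ p.2 ∈ B x} :=
          measure_biUnion_finset_le _ _
      _ ≤ ∑ _T ∈ 𝒯, (q + q') ^ r := sum_le_sum fun T hT =>
          ((h𝒯 T).1 hT).1 ▸ measure_prod_forall_mem_or_mem_le hA hB hq hq' T
      _ ≤ _ := by
          rw [sum_const, nsmul_eq_mul]
          exact mul_le_mul_left (by exact_mod_cast h𝒯card) _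
  calc _ ≤ P {ω | ENNReal.ofReal (Real.exp (-r)) ≤ P' (Prod.mk ω ⁻¹' F)} :=
        measure_mono fun ω hω => hω.le.trans (measure_mono (hsub ω))
    _ ≤ P.prod P' F / ENNReal.ofReal (Real.exp (-r)) :=
        meas_ge_measure_prodMk_preimage_le_div hF (by simp [Real.exp_pos]) ENNReal.ofReal_ne_top
    _ = ENNReal.ofReal (Real.exp r) * P.prod P' F := by
        rw [ENNReal.div_eq_inv_mul, ← ENNReal.ofReal_inv_of_pos (Real.exp_pos _), ← Real.exp_neg,
          neg_neg]
    _ ≤ _ := by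
        rw [mul_assoc]
        gcongr

end Probability

section Numerics

lemma choose_mul_sub_one_le (r m : ℕ) :
    ((r * m).choose (r - 1) : ℝ) ≤ Real.exp r * m ^ (r - 1) := by
  rcases r with _ | s
  · simp
  have hfac : ((s + 1 : ℕ) : ℝ) ^ s / s.factorial
      = ((s + 1 : ℕ) : ℝ) ^ (s + 1) / (s + 1).factorial := by
    rw [Nat.factorial_succ, pow_succ]
    push_cast
    field_simp
  calc (((s + 1) * m).choose (s + 1 - 1) : ℝ)
      ≤ (((s + 1) * m : ℕ) : ℝ) ^ s / s.factorial := by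
        simpa using Nat.choose_le_pow_div (α := ℝ) s ((s + 1) * m)
    _ = m ^ s * (((s + 1 : ℕ) : ℝ) ^ (s + 1) / (s + 1).factorial) := by
        rw [← hfac, Nat.cast_mul, mul_pow]
        ring
    _ ≤ m ^ s * Real.exp ((s + 1 : ℕ) : ℝ) := by
        gcongr
        exact Real.pow_div_factorial_le_exp _ (Nat.cast_nonneg _) _
    _ = _ := by rw [Nat.add_sub_cancel, mul_comm]

lemma two_lt_log_ten : 2 < Real.log 10 := by
  rw [Real.lt_log_iff_exp_lt (by norm_num), show (2 : ℝ) = 1 + 1 by norm_num, Real.exp_add]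
  nlinarith [Real.exp_one_lt_d9, Real.exp_pos 1]

lemma exp_mul_choose_mul_le {d : ℕ} (hd : 1 ≤ d) (r : ℕ) :
    Real.exp r * (r * (2 * d)).choose (r - 1) * (1 / (20 * d)) ^ r
      ≤ Real.exp (-(Real.log 10 - 2) * r) := by
  have hd' : (1 : ℝ) ≤ d := by exact_mod_cast hd
  have htarget : Real.exp (-(Real.log 10 - 2) * r)
      = Real.exp r * Real.exp r * ((2 * d) * (1 / (20 * d))) ^ r := by
    rw [show (2 * d : ℝ) * (1 / (20 * d)) = (10 : ℝ)⁻¹ by field_simp; norm_num, inv_pow,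
      ← Real.exp_log (by norm_num : (0 : ℝ) < 10), ← Real.exp_nat_mul, ← Real.exp_neg,
      ← Real.exp_add, ← Real.exp_add, Real.log_exp]
    ring_nf
  calc _ ≤ Real.exp r * (Real.exp r * ((2 * d : ℕ) : ℝ) ^ r) * (1 / (20 * d)) ^ r := by
        gcongr
        refine (choose_mul_sub_one_le r (2 * d)).trans ?_
        gcongr
        · exact_mod_cast Nat.one_le_iff_ne_zero.2 (by omega)
        · omega
    _ = _ := by
        rw [htarget, mul_pow]
        push_cast
        ring

lemma exists_pow_mul_exp_neg_mul_log_sq_le (d : ℕ) {c : ℝ} (hc : 0 < c) :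
    ∃ R₀ : ℕ, ∀ R : ℕ, R₀ ≤ R →
      ((2 * R + 1) ^ d * (R + 1) : ℝ) * Real.exp (-c * Real.log R ^ 2) ≤ 1 / R ^ 5 := by
  refine ⟨max 3 ⌈Real.exp ((2 * d + 7) / c)⌉₊, fun R hR => ?_⟩
  have hR3 : (3 : ℝ) ≤ R := by exact_mod_cast le_of_max_le_left hR
  have hRpos : (0 : ℝ) < R := by linarith
  have hL : (2 * d + 7) / c ≤ Real.log R := by
    rw [Real.le_log_iff_exp_le hRpos]
    exact (Nat.le_ceil _).trans (by exact_mod_cast le_of_max_le_right hR)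
  have hLpos : 0 < Real.log R := (by positivity : 0 < (2 * (d : ℝ) + 7) / c).trans_le hL
  have hpow : ((2 * R + 1) ^ d * (R + 1) : ℝ) * R ^ 5 ≤ R ^ (2 * d + 7) := by
    calc _ ≤ ((R : ℝ) ^ 2) ^ d * R ^ 2 * R ^ 5 := by gcongr <;> nlinarith
      _ = _ := by ring
  have hexp : (R : ℝ) ^ (2 * d + 7) ≤ Real.exp (c * Real.log R ^ 2) := by
    rw [← Real.exp_log hRpos, ← Real.exp_nat_mul, Real.log_exp, Real.exp_le_exp]
    rw [div_le_iff₀ hc] at hL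
    push_cast
    nlinarith
  rw [neg_mul, Real.exp_neg, le_div_iff₀ (by positivity), mul_right_comm, ← div_eq_mul_inv,
    div_le_one (Real.exp_pos _)]
  exact hpow.trans hexp

end Numerics

section Coarse

variable {Ω Ω' : Type*} [MeasurableSpace Ω] [MeasurableSpace Ω'] {d : ℕ}

lemma meas_lt_measure_clusterAtLeast_le_exp {P : Measure Ω} {P' : Measure Ω'} [SFinite P']
    {K : ℝ} {h : Ω → Site d → ℝ} {η : Ω' → Site d → Bool} (hd : 1 ≤ d)
    (hh : ∀ x, Measurable fun ω => h ω x) (hhind : iIndepFun (fun x ω => |h ω x|) P)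
    (hq : ∀ x, P {ω | |h ω x| ≤ K} ≤ ENNReal.ofReal (1 / (40 * d)))
    (hη : ∀ x, Measurable fun ω' => η ω' x) (hηind : iIndepFun (fun x ω' => η ω' x) P')
    (hq' : ∀ x, P' {ω' | η ω' x = true} ≤ ENNReal.ofReal (1 / (40 * d))) (w : Site d) {r : ℕ}
    (hr : 1 ≤ r) :
    P {ω | ENNReal.ofReal (Real.exp (-r)) < P' {ω' | clusterAtLeast (omI K (h ω) (η ω')) w r}}
      ≤ ENNReal.ofReal (Real.exp (-(Real.log 10 - 2) * r)) := by
  refine (meas_lt_measure_clusterAtLeast_le hh hhind hq hη hηind hq' w hr).trans ?_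
  rw [← ENNReal.ofReal_add (by positivity) (by positivity),
    show (1 / (40 * d) + 1 / (40 * d) : ℝ) = 1 / (20 * d) by ring, ← ENNReal.ofReal_pow
    (by positivity), ← ENNReal.ofReal_natCast, ← ENNReal.ofReal_mul (by positivity),
    ← ENNReal.ofReal_mul (by positivity)]
  exact ENNReal.ofReal_le_ofReal (exp_mul_choose_mul_le hd r)

lemma meas_not_goodAnti_le (P : Measure Ω) (n R : ℕ) (K : ℝ) (P' : Measure Ω')
    (η : Ω' → Site d → Bool) (h : Ω → Site d → ℝ) (v : Site d) (t : ℝ≥0∞)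
    (ht : ∀ w (r : ℕ), Real.log R ^ 2 ≤ r → P {ω | ENNReal.ofReal (Real.exp (-r))
      < P' {ω' | clusterAtLeast (omI K (h ω) (η ω')) w r}} ≤ t) :
    P {ω | ¬ GoodAnti n R K P' η (h ω) v} ≤ ((2 * R + 1) ^ d * (R + 1) : ℕ) * t := by
  set I := (range (R + 1)).filter fun r : ℕ => Real.log R ^ 2 ≤ r
  set E : Site d → ℕ → Set Ω := fun w r => {ω | ENNReal.ofReal (Real.exp (-r))
    < P' {ω' | clusterAtLeast (omI K (h ω) (η ω')) w r}}
  have hsub : {ω | ¬ GoodAnti n R K P' η (h ω) v} ⊆ ⋃ w ∈ ball v R, ⋃ r ∈ I, E w r := by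
    intro ω hω
    simp only [GoodAnti, not_forall, not_le, Set.mem_ofPred_eq] at hω
    obtain ⟨w, hw, r, hr, hrR, hlt⟩ := hω
    have hrR' : r ≤ R := by
      have : (r : ℝ) ≤ R := hrR.trans (by linarith [(Nat.cast_nonneg R : (0 : ℝ) ≤ R)])
      exact_mod_cast this
    simp only [Set.mem_iUnion]
    exact ⟨w, (mem_inter.1 hw).1, r, mem_filter.2 ⟨mem_range.2 (by omega), hr⟩, hlt⟩
  calc P {ω | ¬ GoodAnti n R K P' η (h ω) v}
      ≤ ∑ w ∈ ball v R, ∑ r ∈ I, P (E w r) :=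
        (measure_mono hsub).trans ((measure_biUnion_finset_le _ _).trans
          (sum_le_sum fun w _ => measure_biUnion_finset_le _ _))
    _ ≤ ∑ _w ∈ ball v R, ∑ _r ∈ I, t :=
        sum_le_sum fun w _ => sum_le_sum fun r hr => ht w r (mem_filter.1 hr).2
    _ ≤ _ := by
        simp only [sum_const, nsmul_eq_mul, card_ball, ← mul_assoc]
        push_cast
        gcongr
        exact_mod_cast (card_filter_le _ _).trans (card_range (R + 1)).le

end Coarse

/-- under the anti-concentration assumption, each coarse-graining vertex is
`Bad` with probability at most `R^{-5}`, for `R` at least a `d`-dependent constant. -/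
theorem prob_bad_block_anti (d : ℕ) (hd : 2 ≤ d) :
    ∃ R₀ : ℕ, ∀ (β : ℝ), 0 < β → ∀ (K : ℝ), 0 < K → rhoK d β K < 1 / (40 * d) →
      ∀ R : ℕ, R₀ ≤ R → ∀ n : ℕ,
      ∀ (Ω : Type) (_ : MeasurableSpace Ω) (P : Measure Ω) (_ : IsProbabilityMeasure P)
        (h : Ω → Site d → ℝ), IIDAbsField P h →
        (∀ x, P {ω | |h ω x| ≤ K} < ENNReal.ofReal (1 / (40 * d))) →
      ∀ (Ω' : Type) (_ : MeasurableSpace Ω') (P' : Measure Ω')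
        (_ : IsProbabilityMeasure P') (η : Ω' → Site d → Bool),
        BernoulliField P' η (rhoK d β K) →
      ∀ v ∈ coarse d n R,
        P {ω | ¬ GoodAnti n R K P' η (h ω) v} ≤ ENNReal.ofReal (1 / (R : ℝ) ^ 5) := by
  obtain ⟨R₀, hR₀⟩ := exists_pow_mul_exp_neg_mul_log_sq_le d (sub_pos.2 two_lt_log_ten)
  refine ⟨max 3 R₀, fun β _ K _ hρ R hR n Ω _ P _ h hh hq Ω' _ P' _ η hη v _ => ?_⟩
  have hR3 : (3 : ℝ) ≤ R := by exact_mod_cast le_of_max_le_left hR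
  have hlogR : 1 ≤ Real.log R := by
    rw [Real.le_log_iff_exp_le (by linarith)]
    linarith [Real.exp_one_lt_d9]
  have hq' : ∀ x, P' {ω' | η ω' x = true} ≤ ENNReal.ofReal (1 / (40 * d)) :=
    fun x => (hη.2.2 x).trans_le (ENNReal.ofReal_le_ofReal hρ.le)
  refine (meas_not_goodAnti_le P n R K P' η h v
    (ENNReal.ofReal (Real.exp (-(Real.log 10 - 2) * Real.log R ^ 2))) fun w r hr => ?_).trans ?_
  · have hr1 : 1 ≤ r := by exact_mod_cast (by nlinarith : (1 : ℝ) ≤ Real.log R ^ 2).trans hr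
    refine (meas_lt_measure_clusterAtLeast_le_exp (by omega) hh.1 hh.2.1 (fun x => (hq x).le)
      hη.1 hη.2.1 hq' w hr1).trans (ENNReal.ofReal_le_ofReal ?_)
    exact Real.exp_le_exp.2 (by nlinarith [two_lt_log_ten])
  · rw [← ENNReal.ofReal_natCast, ← ENNReal.ofReal_mul (by positivity)]
    exact ENNReal.ofReal_le_ofReal (by exact_mod_cast hR₀ R (le_of_max_le_right hR))

end RFIM
end
end
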